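/- arXiv:2206.12087 — 7 statements merged into one kernel-verified Lean document; each statement's English description precedes it below -/
import Mathlib

section
/- For every n ≥ 0, the number of zigzag knight's paths of length 2n that start at the origin and end on the x-axis equals the Catalan number C(n+1) = (1/(n+2))·binom(2n+2, n+1). -/
open List

/-- The four right-moves of a knight. -/
def KnightSteps : Set (ℤ × ℤ) := {(2,1), (2,-1), (1,2), (1,-2)}

/-- All partial sums of the y-coordinates are nonnegative (the path stays in ℕ²). -/
def NonnegHeights (p : List (ℤ × ℤ)) : Prop :=
  ∀ i, 0 ≤ ((p.take i).map Prod.snd).sum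

/-- A partial knight's path: steps from `KnightSteps`, never going below the x-axis. -/
def IsPartialKnight (p : List (ℤ × ℤ)) : Prop :=
  (∀ s ∈ p, s ∈ KnightSteps) ∧ NonnegHeights p

/-- Any two consecutive steps have vertical components of opposite sign. -/
def IsZigzag (p : List (ℤ × ℤ)) : Prop :=
  List.Chain' (fun a b => a.2 * b.2 < 0) p

/-- A partial zigzag knight's path. -/
def IsPartialZigzag (p : List (ℤ × ℤ)) : Prop :=
  IsPartialKnight p ∧ IsZigzag p

/-- The height of the endpoint of a path. -/
def pathHeight (p : List (ℤ × ℤ)) : ℤ := (p.map Prod.snd).sum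

/-- The size (x-coordinate of the endpoint) of a path. -/
def pathSize (p : List (ℤ × ℤ)) : ℤ := (p.map Prod.fst).sum

/-- A zigzag knight's path ending on the x-axis. -/
def IsZigzagKnightPath (p : List (ℤ × ℤ)) : Prop :=
  IsPartialZigzag p ∧ pathHeight p = 0

/-- The last step of `p` exists and is an up-step. -/
def EndsWithUp (p : List (ℤ × ℤ)) : Prop :=
  ∃ s, p.getLast? = some s ∧ 0 < s.2

/-- The last step of `p` exists and is a down-step. -/
def EndsWithDown (p : List (ℤ × ℤ)) : Prop :=
  ∃ s, p.getLast? = some s ∧ s.2 < 0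

def Estep : ℤ × ℤ := (2, 1)
def Ebar  : ℤ × ℤ := (2, -1)
def Nstep : ℤ × ℤ := (1, 2)
def Nbar  : ℤ × ℤ := (1, -2)

/-! A zigzag path that starts on the x-axis must begin with an up-step, so its steps alternate
up, down, up, …, and each step is fixed by one bit: `N` or `E` at even positions, `Ē` or `N̄` at odd
ones. Recording that bit as a Dyck letter (`N, Ē ↦ U` and `E, N̄ ↦ D`) turns the path into a word `c`
with `2 · (height after i steps) = (#U - #D among the first i letters) + 3 · (i mod 2)`. So the path
stays in ℕ² and ends on the x-axis iff the letter heights of `c` stay `≥ -1` and end at `0`, that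
is, iff `U c D` is a Dyck word, and Dyck words of semilength `n + 1` are counted by `C(n+1)`. -/

namespace ZigzagKnight

open DyckStep

def dyckHeight (l : List DyckStep) : ℤ := l.count U - l.count D

@[simp] lemma dyckHeight_nil : dyckHeight [] = 0 := rfl

@[simp] lemma dyckHeight_cons_U (l : List DyckStep) : dyckHeight (U :: l) = dyckHeight l + 1 := by
  simp [dyckHeight]; ring

@[simp] lemma dyckHeight_cons_D (l : List DyckStep) : dyckHeight (D :: l) = dyckHeight l - 1 := by
  simp [dyckHeight]; ring

@[simp] lemma dyckHeight_append (l m : List DyckStep) :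
    dyckHeight (l ++ m) = dyckHeight l + dyckHeight m := by
  simp [dyckHeight, count_append]; ring

lemma sub_one_le_dyckHeight_take_succ (l : List DyckStep) (i : ℕ) :
    dyckHeight (l.take i) - 1 ≤ dyckHeight (l.take (i + 1)) := by
  rw [take_add_one, dyckHeight_append]
  rcases l[i]? with _ | _ | _ <;> simp
  linarith

lemma dyckHeight_take_succ_cons_append (c : List DyckStep) (i : ℕ) :
    dyckHeight ((U :: c ++ [D]).take (i + 1)) =
      dyckHeight (c.take i) + 1 - if c.length < i then 1 else 0 := by
  rw [cons_append, take_succ_cons, dyckHeight_cons_U]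
  split_ifs with hi
  · rw [take_of_length_le (by simp; omega), take_of_length_le hi.le]
    simp
  · rw [take_append_of_le_length (by omega)]
    simp

def IsDyckInterior (c : List DyckStep) : Prop :=
  dyckHeight c = 0 ∧ ∀ i, -1 ≤ dyckHeight (c.take i)

def dyckWordOfInterior (c : List DyckStep) (hc : IsDyckInterior c) : DyckWord where
  toList := U :: c ++ [D]
  count_U_eq_count_D := by
    have h : dyckHeight (U :: c ++ [D]) = 0 := by simp [hc.1]
    simp only [dyckHeight] at h
    omega
  count_D_le_count_U
    | 0 => by simp
    | i + 1 => by
      have h := dyckHeight_take_succ_cons_append c i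
      have := hc.2 i
      split_ifs at h with hi
      · rw [take_of_length_le hi.le, hc.1] at h
        simp only [dyckHeight] at h; omega
      · simp only [dyckHeight] at h this; omega

lemma isDyckInterior_dropLast_tail (w : DyckWord) : IsDyckInterior w.toList.dropLast.tail := by
  rcases eq_or_ne w 0 with rfl | hw
  · exact ⟨rfl, fun i => by simp [DyckWord.toList_eq_nil.mpr rfl]⟩
  have hwrap := DyckWord.cons_tail_dropLast_concat hw
  set c := w.toList.dropLast.tail
  have hc : dyckHeight c = 0 := by
    have h := w.count_U_eq_count_D
    rw [← hwrap] at h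
    simp [dyckHeight, count_append] at h ⊢
    omega
  refine ⟨hc, fun i => ?_⟩
  have h := w.count_D_le_count_U (i + 1)
  have hi := dyckHeight_take_succ_cons_append c i
  rw [← hwrap] at h
  simp only [dyckHeight] at hi ⊢
  split_ifs at hi <;> omega

def knightStep : Bool → DyckStep → ℤ × ℤ
  | true, U => Nstep
  | true, D => Estep
  | false, U => Ebar
  | false, D => Nbar

def toKnight : Bool → List DyckStep → List (ℤ × ℤ)
  | _, [] => []
  | b, c :: l => knightStep b c :: toKnight (!b) l

def toDyck (s : ℤ × ℤ) : DyckStep := if s.2 = 2 ∨ s.2 = -1 then U else D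

@[simp] lemma toKnight_nil (b : Bool) : toKnight b [] = [] := rfl

@[simp] lemma toKnight_cons (b : Bool) (c : DyckStep) (l : List DyckStep) :
    toKnight b (c :: l) = knightStep b c :: toKnight (!b) l := rfl

@[simp] lemma length_toKnight (b : Bool) (c : List DyckStep) : (toKnight b c).length = c.length := by
  induction c generalizing b <;> simp [*]

lemma toKnight_take (b : Bool) (c : List DyckStep) (i : ℕ) :
    (toKnight b c).take i = toKnight b (c.take i) := by
  induction c generalizing b i with
  | nil => simp
  | cons c l ih => cases i <;> simp [ih]

@[simp] lemma toDyck_knightStep (b : Bool) (c : DyckStep) : toDyck (knightStep b c) = c := by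
  cases b <;> cases c <;> simp [toDyck, knightStep, Estep, Ebar, Nstep, Nbar]

lemma map_toDyck_toKnight (b : Bool) (c : List DyckStep) : (toKnight b c).map toDyck = c := by
  induction c generalizing b <;> simp [*]

lemma knightStep_mem_knightSteps (b : Bool) (c : DyckStep) : knightStep b c ∈ KnightSteps := by
  cases b <;> cases c <;> simp [knightStep, KnightSteps, Estep, Ebar, Nstep, Nbar]

lemma mem_knightSteps_of_mem_toKnight (b : Bool) (c : List DyckStep) :
    ∀ s ∈ toKnight b c, s ∈ KnightSteps := by
  induction c generalizing b with
  | nil => simp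
  | cons c l ih =>
    simpa [knightStep_mem_knightSteps] using ih !b

lemma isZigzag_toKnight (b : Bool) (c : List DyckStep) : IsZigzag (toKnight b c) := by
  induction c generalizing b with
  | nil => exact isChain_nil
  | cons c l ih =>
    refine isChain_cons.mpr ⟨fun r hr => ?_, ih !b⟩
    cases l with
    | nil => simp at hr
    | cons d l =>
      obtain rfl : knightStep (!b) d = r := by simpa using hr
      cases b <;> cases c <;> cases d <;> simp [knightStep, Estep, Ebar, Nstep, Nbar]

/-- An up-step coded by a letter of height `h = ±1` rises by `(h + 3) / 2`, a down-step falls by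
`(3 - h) / 2`; along the alternating path the `±3`s cancel in pairs. -/
lemma two_mul_pathHeight_toKnight (b : Bool) (c : List DyckStep) :
    2 * pathHeight (toKnight b c) =
      dyckHeight c + (if b then 3 else -3) * ((c.length % 2 : ℕ) : ℤ) := by
  induction c generalizing b with
  | nil => simp [pathHeight]
  | cons c l ih =>
    have := ih (!b)
    simp only [pathHeight, toKnight_cons, map_cons, sum_cons] at this ⊢
    cases b <;> cases c <;> simp [knightStep, Estep, Ebar, Nstep, Nbar] at this ⊢ <;> omega

lemma knightStep_toDyck {s : ℤ × ℤ} (hs : s ∈ KnightSteps) (b : Bool) (hb : 0 < s.2 ↔ b = true) :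
    knightStep b (toDyck s) = s := by
  simp only [KnightSteps, Set.mem_insert_iff, Set.mem_singleton_iff] at hs
  rcases hs with rfl | rfl | rfl | rfl <;> cases b <;>
    simp_all [knightStep, toDyck, Estep, Ebar, Nstep, Nbar]

lemma toKnight_map_toDyck {p : List (ℤ × ℤ)} (hk : ∀ s ∈ p, s ∈ KnightSteps) (hz : IsZigzag p)
    (b : Bool) (hb : ∀ s ∈ p.head?, 0 < s.2 ↔ b = true) : toKnight b (p.map toDyck) = p := by
  induction p generalizing b with
  | nil => rfl
  | cons s t ih =>
    have hsb := hb s rfl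
    refine congr_arg₂ _ (knightStep_toDyck (hk s (by simp)) b hsb)
      (ih (fun r hr => hk r (by simp [hr])) hz.tail (!b) fun r hr => ?_)
    have hsr : s.2 * r.2 < 0 := isChain_cons.mp hz |>.1 r hr
    rcases mul_neg_iff.mp hsr with ⟨h1, h2⟩ | ⟨h1, h2⟩ <;> cases b <;> simp_all <;> omega

lemma toKnight_map_toDyck_of_isPartialZigzag {p : List (ℤ × ℤ)} (hp : IsPartialZigzag p) :
    toKnight true (p.map toDyck) = p := by
  refine toKnight_map_toDyck hp.1.1 hp.2 true fun s hs => ?_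
  cases p with
  | nil => simp at hs
  | cons a t =>
    obtain rfl : s = a := by simpa using hs.symm
    have hs0 : 0 ≤ s.2 := by simpa using hp.1.2 1
    have hsne : s.2 ≠ 0 := by
      have hmem := hp.1.1 s (by simp)
      simp only [KnightSteps, Set.mem_insert_iff, Set.mem_singleton_iff] at hmem
      rcases hmem with rfl | rfl | rfl | rfl <;> simp
    simp only [iff_true]
    omega

theorem isZigzagKnightPath_toKnight_iff (c : List DyckStep) (hc : Even c.length) :
    IsZigzagKnightPath (toKnight true c) ↔ IsDyckInterior c := by
  obtain ⟨m, hm⟩ := hc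
  have hprefix (i : ℕ) : 2 * pathHeight ((toKnight true c).take i) =
      dyckHeight (c.take i) + 3 * ((min i c.length % 2 : ℕ) : ℤ) := by
    rw [toKnight_take, two_mul_pathHeight_toKnight, length_take]
    simp
  have htotal := two_mul_pathHeight_toKnight true c
  simp only [IsZigzagKnightPath, IsPartialZigzag, IsPartialKnight, NonnegHeights,
    isZigzag_toKnight, and_true, and_iff_right (mem_knightSteps_of_mem_toKnight true c)]
  constructor
  · rintro ⟨hnonneg, hzero⟩
    refine ⟨by simp at htotal; omega, fun i => ?_⟩
    have hk (k : ℕ) : 0 ≤ pathHeight ((toKnight true c).take (2 * k)) := hnonneg (2 * k)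
    obtain ⟨k, rfl | rfl⟩ := Nat.even_or_odd' i
    · have := hprefix (2 * k)
      have := hk k
      omega
    · have := hprefix (2 * k)
      have := hk k
      have := sub_one_le_dyckHeight_take_succ c (2 * k)
      omega
  · rintro ⟨hzero, hge⟩
    refine ⟨fun i => ?_, by simp at htotal; omega⟩
    have := hprefix i
    have := hge i
    show 0 ≤ pathHeight _
    omega

lemma isDyckInterior_map_toDyck {p : List (ℤ × ℤ)} (hp : IsZigzagKnightPath p)
    (he : Even p.length) : IsDyckInterior (p.map toDyck) := by
  rw [← isZigzagKnightPath_toKnight_iff _ (by simpa using he),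
    toKnight_map_toDyck_of_isPartialZigzag hp.1]
  exact hp

lemma two_mul_semilength_dyckWordOfInterior (c : List DyckStep) (hc : IsDyckInterior c) :
    2 * (dyckWordOfInterior c hc).semilength = c.length + 2 := by
  rw [DyckWord.two_mul_semilength_eq_length]
  simp [dyckWordOfInterior]

lemma length_dropLast_tail (w : DyckWord) :
    w.toList.dropLast.tail.length = 2 * w.semilength - 2 := by
  simp [DyckWord.two_mul_semilength_eq_length]
  omega

def pathEquivDyckWord (n : ℕ) :
    {p : List (ℤ × ℤ) // IsZigzagKnightPath p ∧ p.length = 2 * n} ≃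
      {w : DyckWord // w.semilength = n + 1} where
  toFun p :=
    ⟨dyckWordOfInterior _ (isDyckInterior_map_toDyck p.2.1 ⟨n, by omega⟩), by
      have := two_mul_semilength_dyckWordOfInterior _ (isDyckInterior_map_toDyck p.2.1 ⟨n, by omega⟩)
      simp only [length_map, p.2.2] at this
      omega⟩
  invFun w :=
    ⟨toKnight true w.1.toList.dropLast.tail,
      (isZigzagKnightPath_toKnight_iff _ ⟨n, by rw [length_dropLast_tail, w.2]; omega⟩).mpr
        (isDyckInterior_dropLast_tail w.1),
      by rw [length_toKnight, length_dropLast_tail, w.2]; omega⟩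
  left_inv p := Subtype.ext <| by
    simp only [dyckWordOfInterior, dropLast_concat, tail_cons]
    exact toKnight_map_toDyck_of_isPartialZigzag p.2.1.1
  right_inv w := by
    have hw : w.1 ≠ 0 := fun h => by simpa [h] using w.2
    refine Subtype.ext (DyckWord.ext ?_)
    simp [dyckWordOfInterior, map_toDyck_toKnight, DyckWord.cons_tail_dropLast_concat hw]

end ZigzagKnight

open ZigzagKnight

/-- zigzag knight's paths of length 2n ending on the x-axis are
counted by the Catalan number C(n+1) = (1/(n+2))·binom(2n+2, n+1). -/
theorem stmt0 (n : ℕ) :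
    Nat.card {p : List (ℤ × ℤ) // IsZigzagKnightPath p ∧ p.length = 2 * n}
      = catalan (n + 1) ∧
    (Nat.card {p : List (ℤ × ℤ) // IsZigzagKnightPath p ∧ p.length = 2 * n} : ℚ)
      = (1 / (n + 2)) * Nat.choose (2 * n + 2) (n + 1) := by
  have hcard : Nat.card {p : List (ℤ × ℤ) // IsZigzagKnightPath p ∧ p.length = 2 * n}
      = catalan (n + 1) := by
    rw [Nat.card_congr (pathEquivDyckWord n), Nat.card_eq_fintype_card,
      DyckWord.card_dyckWord_semilength_eq_catalan]
  refine ⟨hcard, ?_⟩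
  have hbinom : ((n + 2 : ℕ) : ℚ) * catalan (n + 1) = Nat.choose (2 * n + 2) (n + 1) := by
    exact_mod_cast succ_mul_catalan_eq_centralBinom (n + 1)
  rw [hcard]
  field_simp
  push_cast at hbinom
  linarith
end

section
/- There is no zigzag knight's path of odd length that starts at the origin and ends on the x-axis. -/
open List

/-! The first step of a path in ℕ² must go up, and in a zigzag path the vertical components
alternate in sign, so a path of odd length ends with an up-step. Since the height before that
step is nonnegative, the endpoint lies strictly above the x-axis. -/

theorem snd_ne_zero_of_mem_knightSteps {s : ℤ × ℤ} (hs : s ∈ KnightSteps) : s.2 ≠ 0 := by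
  rcases hs with rfl | rfl | rfl | rfl <;> decide

namespace List

theorem neg_one_pow_mul_getElem_pos {l : List ℤ} (hl : l.IsChain (fun a b => a * b < 0))
    {i : ℕ} (hi : i < l.length) (h0 : 0 < l[0]'(Nat.zero_lt_of_lt hi)) :
    0 < (-1) ^ i * l[i] := by
  induction i with
  | zero => simpa using h0
  | succ i ih =>
    have hprev := ih (by omega) h0
    have hopp : l[i] * l[i + 1] < 0 := isChain_iff_getElem.mp hl i hi
    have hsq : ((-1 : ℤ) ^ i) ^ 2 = 1 := by rw [← pow_mul, mul_comm, pow_mul]; norm_num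
    rw [pow_succ]
    nlinarith

theorem sum_pos_of_isChain_mul_neg_of_odd_length {l : List ℤ}
    (hl : l.IsChain (fun a b => a * b < 0)) (hne : ∀ a ∈ l, a ≠ 0)
    (hnn : ∀ i, 0 ≤ (l.take i).sum) (hodd : Odd l.length) :
    0 < l.sum := by
  obtain ⟨k, hk⟩ := hodd
  have hlast : 2 * k < l.length := by omega
  have hfirst : 0 < l[0] := by
    have := hnn 1
    rw [take_one, head?_eq_getElem?, getElem?_eq_getElem (by omega)] at this
    exact lt_of_le_of_ne (by simpa using this) (hne _ (getElem_mem _)).symm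
  have hlast_pos : 0 < l[2 * k] := by
    simpa [Even.neg_one_pow ⟨k, two_mul k⟩] using neg_one_pow_mul_getElem_pos hl hlast hfirst
  calc 0 < (l.take (2 * k)).sum + l[2 * k] := by linarith [hnn (2 * k)]
    _ = (l.take (2 * k + 1)).sum := (sum_take_succ l (2 * k) hlast).symm
    _ = l.sum := by rw [← hk, take_length]

end List

/-- no zigzag knight's path of odd length ends on the x-axis. -/
theorem stmt1 :
    ¬ ∃ p : List (ℤ × ℤ), IsZigzagKnightPath p ∧ Odd p.length := by
  rintro ⟨p, ⟨⟨⟨hsteps, hnn⟩, hzig⟩, hend⟩, hodd⟩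
  have hpos : 0 < pathHeight p := by
    refine List.sum_pos_of_isChain_mul_neg_of_odd_length ((List.isChain_map _).mpr hzig) ?_ ?_
      (by simpa using hodd)
    · simp only [List.mem_map]
      rintro _ ⟨s, hs, rfl⟩
      exact snd_ne_zero_of_mem_knightSteps (hsteps s hs)
    · intro i
      rw [← List.map_take]
      exact hnn i
  exact hpos.ne' hend
end

section
/- For all n ≥ 1 and k ≥ 1, the number of partial zigzag knight's paths of length 2n−1 that end at height k with their last step being an up-step (i.e., a step (1,2) or (2,1)) equals ((2k−1)/(n+k))·binom(2n, n−k+1). -/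
open List

/-- `ichoose m j` is `choose m j` for `j ≥ 0` and `0` for negative `j`. -/
def ichoose (m : ℕ) (j : ℤ) : ℕ := if 0 ≤ j then m.choose j.toNat else 0

/-!
Deleting the last step of a path of length `2m + 1` that ends with an up-step at height `k`
leaves a path of length `2m` at height `k - 1` or `k - 2` that is empty or ends with a down-step;
likewise a path of length `2m + 2` ending with a down-step at height `h` shrinks to a path of
length `2m + 1` at height `h + 1` or `h + 2` ending with an up-step. The two recurrences are solved,
via Pascal's rule, by the ballot-type differences `C(2m, m - h) - C(2m, m - h - 2)` and
`C(2m + 2, m - k + 2) - C(2m + 2, m - k + 1)`, and the identity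
`(N + 1 - j) (C(N, j) - C(N, j - 1)) = (N + 1 - 2j) C(N, j)` turns the latter into the stated
form, with `n = m + 1`.
-/

lemma pathHeight_concat (q : List (ℤ × ℤ)) (s : ℤ × ℤ) :
    pathHeight (q ++ [s]) = pathHeight q + s.2 := by
  simp [pathHeight]

lemma NonnegHeights.pathHeight_nonneg {p : List (ℤ × ℤ)} (hp : NonnegHeights p) :
    0 ≤ pathHeight p := by
  simpa [pathHeight] using hp p.length

lemma nonnegHeights_concat {q : List (ℤ × ℤ)} {s : ℤ × ℤ} :
    NonnegHeights (q ++ [s]) ↔ NonnegHeights q ∧ 0 ≤ pathHeight q + s.2 := by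
  refine ⟨fun H => ⟨fun i => ?_, pathHeight_concat q s ▸ H.pathHeight_nonneg⟩,
    fun ⟨H, hs⟩ i => ?_⟩
  all_goals rcases le_or_gt i q.length with hi | hi
  · simpa only [List.take_append_of_le_length hi] using H i
  · simpa only [List.take_append_of_le_length le_rfl, List.take_of_length_le hi.le,
      List.take_length] using H q.length
  · simpa only [List.take_append_of_le_length hi] using H i
  · rw [List.take_of_length_le (by simpa using hi)]
    simpa [pathHeight] using hs

lemma isZigzag_iff_isChain {p : List (ℤ × ℤ)} :
    IsZigzag p ↔ p.IsChain (fun a b => a.2 * b.2 < 0) :=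
  Iff.rfl

lemma isPartialZigzag_nil : IsPartialZigzag [] :=
  ⟨⟨by simp, by simp [NonnegHeights]⟩, List.isChain_nil⟩

lemma isPartialZigzag_concat {q : List (ℤ × ℤ)} {s : ℤ × ℤ} :
    IsPartialZigzag (q ++ [s]) ↔ IsPartialZigzag q ∧ s ∈ KnightSteps ∧
      0 ≤ pathHeight q + s.2 ∧ ∀ l ∈ q.getLast?, l.2 * s.2 < 0 := by
  simp only [IsPartialZigzag, IsPartialKnight, isZigzag_iff_isChain, nonnegHeights_concat,
    List.isChain_append, List.mem_append, List.mem_singleton, or_imp, forall_and,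
    forall_eq, List.isChain_singleton, List.head?_cons, Option.mem_def, Option.some.injEq,
    forall_eq', true_and]
  tauto

lemma mem_knightSteps_and_pos_iff {s : ℤ × ℤ} :
    s ∈ KnightSteps ∧ 0 < s.2 ↔ s = (2, 1) ∨ s = (1, 2) := by
  simp only [KnightSteps, Set.mem_insert_iff, Set.mem_singleton_iff]
  constructor
  · rintro ⟨rfl | rfl | rfl | rfl, h⟩ <;> simp_all
  · rintro (rfl | rfl) <;> simp

lemma mem_knightSteps_and_neg_iff {s : ℤ × ℤ} :
    s ∈ KnightSteps ∧ s.2 < 0 ↔ s = (2, -1) ∨ s = (1, -2) := by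
  simp only [KnightSteps, Set.mem_insert_iff, Set.mem_singleton_iff]
  constructor
  · rintro ⟨rfl | rfl | rfl | rfl, h⟩ <;> simp_all
  · rintro (rfl | rfl) <;> simp

def zigzagEndingUp (m : ℕ) (k : ℤ) : Set (List (ℤ × ℤ)) :=
  {p | IsPartialZigzag p ∧ p.length = 2 * m + 1 ∧ pathHeight p = k ∧ EndsWithUp p}

def zigzagEndingDown (m : ℕ) (h : ℤ) : Set (List (ℤ × ℤ)) :=
  {p | IsPartialZigzag p ∧ p.length = 2 * m ∧ pathHeight p = h ∧
    ∀ s ∈ p.getLast?, s.2 < 0}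

lemma concat_mem_zigzagEndingUp_iff {m : ℕ} {k : ℤ} {q : List (ℤ × ℤ)} {s : ℤ × ℤ} :
    q ++ [s] ∈ zigzagEndingUp m k ↔
      (s = (2, 1) ∨ s = (1, 2)) ∧ q ∈ zigzagEndingDown m (k - s.2) := by
  simp only [zigzagEndingUp, zigzagEndingDown, Set.mem_ofPred_eq, isPartialZigzag_concat,
    EndsWithUp, List.getLast?_concat, Option.some.injEq, exists_eq_left', List.length_append,
    List.length_singleton, pathHeight_concat, ← mem_knightSteps_and_pos_iff]
  constructor
  · rintro ⟨⟨hq, hs, -, hlast⟩, hlen, hk, hup⟩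
    exact ⟨⟨hs, hup⟩, hq, by omega, by omega,
      fun l hl => neg_of_mul_neg_left (hlast l hl) hup.le⟩
  · rintro ⟨⟨hs, hup⟩, hq, hlen, hk, hlast⟩
    exact ⟨⟨hq, hs, by linarith [hq.1.2.pathHeight_nonneg],
      fun l hl => mul_neg_of_neg_of_pos (hlast l hl) hup⟩, by omega, by omega, hup⟩

lemma concat_mem_zigzagEndingDown_succ_iff {m : ℕ} {h : ℤ} {q : List (ℤ × ℤ)}
    {s : ℤ × ℤ} :
    q ++ [s] ∈ zigzagEndingDown (m + 1) h ↔
      0 ≤ h ∧ (s = (2, -1) ∨ s = (1, -2)) ∧ q ∈ zigzagEndingUp m (h - s.2) := by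
  simp only [zigzagEndingUp, zigzagEndingDown, Set.mem_ofPred_eq, isPartialZigzag_concat,
    EndsWithUp, List.getLast?_concat, Option.mem_def, Option.some.injEq, forall_eq',
    List.length_append, List.length_singleton, pathHeight_concat, ← mem_knightSteps_and_neg_iff]
  constructor
  · rintro ⟨⟨hq, hs, hnonneg, hlast⟩, hlen, hh, hdown⟩
    have hne : q ≠ [] := List.ne_nil_of_length_pos (by omega)
    have hqLast := List.getLast?_eq_some_getLast hne
    exact ⟨by omega, ⟨hs, hdown⟩, hq, by omega, by omega, _, hqLast,
      pos_of_mul_neg_left (hlast _ hqLast) hdown.le⟩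
  · rintro ⟨hh, ⟨hs, hdown⟩, hq, hlen, hk, l, hl, hup⟩
    refine ⟨⟨hq, hs, by omega, fun l' hl' => ?_⟩, by omega, by omega, hdown⟩
    obtain rfl : l = l' := by simpa [hl] using hl'
    exact mul_neg_of_pos_of_neg hup hdown

lemma concat_mem_image_concat_iff {α : Type*} {A : Set (List α)} {q : List α} {s t : α} :
    q ++ [s] ∈ (· ++ [t]) '' A ↔ s = t ∧ q ∈ A := by
  constructor
  · rintro ⟨q', hq', h⟩
    obtain ⟨rfl, hts⟩ := List.append_inj' h rfl
    exact ⟨(List.singleton_inj.1 hts).symm, hq'⟩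
  · rintro ⟨rfl, hq⟩
    exact ⟨q, hq, rfl⟩

lemma ncard_image_concat_union_image_concat {α : Type*} {s t : α} (hst : s ≠ t)
    {A B : Set (List α)} (hA : A.Finite) (hB : B.Finite) :
    ((· ++ [s]) '' A ∪ (· ++ [t]) '' B).ncard = A.ncard + B.ncard := by
  have hdisj : Disjoint ((· ++ [s]) '' A) ((· ++ [t]) '' B) := by
    refine Set.disjoint_left.2 ?_
    rintro _ ⟨q, -, rfl⟩ hq
    exact hst (concat_mem_image_concat_iff.1 hq).1
  rw [Set.ncard_union_eq hdisj (hA.image _) (hB.image _),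
    Set.ncard_image_of_injective _ (List.append_left_injective _),
    Set.ncard_image_of_injective _ (List.append_left_injective _)]

lemma finite_setOf_isPartialZigzag_length (L : ℕ) :
    {p | IsPartialZigzag p ∧ p.length = L}.Finite := by
  have : Finite KnightSteps := by unfold KnightSteps; infer_instance
  refine ((List.finite_length_eq KnightSteps L).image (List.map Subtype.val)).subset ?_
  rintro p ⟨⟨⟨hK, -⟩, -⟩, rfl⟩
  lift p to List KnightSteps using hK
  exact ⟨p, by simp, rfl⟩

lemma zigzagEndingUp_finite (m : ℕ) (k : ℤ) : (zigzagEndingUp m k).Finite :=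
  (finite_setOf_isPartialZigzag_length _).subset fun _ hp => ⟨hp.1, hp.2.1⟩

lemma zigzagEndingDown_finite (m : ℕ) (h : ℤ) : (zigzagEndingDown m h).Finite :=
  (finite_setOf_isPartialZigzag_length _).subset fun _ hp => ⟨hp.1, hp.2.1⟩

lemma zigzagEndingUp_eq (m : ℕ) (k : ℤ) :
    zigzagEndingUp m k = (· ++ [(2, 1)]) '' zigzagEndingDown m (k - 1) ∪
      (· ++ [(1, 2)]) '' zigzagEndingDown m (k - 2) := by
  ext p
  rcases List.eq_nil_or_concat p with rfl | ⟨q, s, rfl⟩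
  · simp [zigzagEndingUp]
  · simp only [List.concat_eq_append, concat_mem_zigzagEndingUp_iff, Set.mem_union,
      concat_mem_image_concat_iff]
    constructor
    · rintro ⟨rfl | rfl, hq⟩
      exacts [.inl ⟨rfl, hq⟩, .inr ⟨rfl, hq⟩]
    · rintro (⟨rfl, hq⟩ | ⟨rfl, hq⟩)
      exacts [⟨.inl rfl, hq⟩, ⟨.inr rfl, hq⟩]

lemma zigzagEndingDown_succ_eq (m : ℕ) {h : ℤ} (hh : 0 ≤ h) :
    zigzagEndingDown (m + 1) h = (· ++ [(2, -1)]) '' zigzagEndingUp m (h + 1) ∪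
      (· ++ [(1, -2)]) '' zigzagEndingUp m (h + 2) := by
  ext p
  rcases List.eq_nil_or_concat p with rfl | ⟨q, s, rfl⟩
  · simp [zigzagEndingDown]
  · simp only [List.concat_eq_append, concat_mem_zigzagEndingDown_succ_iff, Set.mem_union,
      concat_mem_image_concat_iff, hh, true_and]
    constructor
    · rintro ⟨rfl | rfl, hq⟩
      exacts [.inl ⟨rfl, hq⟩, .inr ⟨rfl, hq⟩]
    · rintro (⟨rfl, hq⟩ | ⟨rfl, hq⟩)
      exacts [⟨.inl rfl, hq⟩, ⟨.inr rfl, hq⟩]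

lemma zigzagEndingDown_of_neg (m : ℕ) {h : ℤ} (hh : h < 0) : zigzagEndingDown m h = ∅ :=
  Set.eq_empty_of_forall_notMem fun _ ⟨hp, _, hph, _⟩ => by
    linarith [hp.1.2.pathHeight_nonneg]

lemma zigzagEndingDown_zero (h : ℤ) :
    zigzagEndingDown 0 h = if h = 0 then {[]} else ∅ := by
  ext p
  simp only [zigzagEndingDown, Set.mem_ofPred_eq, mul_zero, List.length_eq_zero_iff]
  constructor
  · rintro ⟨-, rfl, rfl, -⟩
    simp [pathHeight]
  · split_ifs with hh
    · rintro rfl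
      exact ⟨isPartialZigzag_nil, rfl, by simp [pathHeight, hh], by simp⟩
    · simp

lemma ichoose_of_neg {m : ℕ} {j : ℤ} (h : j < 0) : ichoose m j = 0 := by
  simp [ichoose, not_le.2 h]

lemma ichoose_of_lt {m : ℕ} {j : ℤ} (h : (m : ℤ) < j) : ichoose m j = 0 := by
  rw [ichoose, if_pos (by omega)]
  exact Nat.choose_eq_zero_of_lt (by omega)

lemma ichoose_natCast (m j : ℕ) : ichoose m j = m.choose j := by
  simp [ichoose]

lemma ichoose_symm (m : ℕ) (j : ℤ) : ichoose m ((m : ℤ) - j) = ichoose m j := by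
  rcases lt_or_ge j 0 with h | h
  · rw [ichoose_of_neg h, ichoose_of_lt (by omega)]
  rcases le_or_gt j m with h' | h'
  · lift j to ℕ using h
    rw [show (m : ℤ) - j = ((m - j : ℕ) : ℤ) by omega, ichoose_natCast, ichoose_natCast,
      Nat.choose_symm (by exact_mod_cast h')]
  · rw [ichoose_of_lt h', ichoose_of_neg (by omega)]

lemma ichoose_succ (m : ℕ) (j : ℤ) : ichoose (m + 1) j = ichoose m j + ichoose m (j - 1) := by
  rcases lt_or_ge j 1 with h | h
  · rcases lt_or_ge j 0 with h' | h'
    · rw [ichoose_of_neg h', ichoose_of_neg h', ichoose_of_neg (by omega)]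
    · obtain rfl : j = 0 := by omega
      simp [ichoose]
  · obtain ⟨i, rfl⟩ : ∃ i : ℕ, j = i + 1 := ⟨(j - 1).toNat, by omega⟩
    rw [add_sub_cancel_right, ← Nat.cast_succ i, ichoose_natCast, ichoose_natCast,
      ichoose_natCast, Nat.choose_succ_succ', add_comm]

lemma mul_ichoose_sub_ichoose_sub_one (N : ℕ) (j : ℤ) :
    ((N : ℤ) + 1 - j) * (ichoose N j - ichoose N (j - 1)) = (N + 1 - 2 * j) * ichoose N j := by
  rcases lt_or_ge j 1 with h | h
  · rcases lt_or_ge j 0 with h' | h'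
    · simp [ichoose_of_neg h', ichoose_of_neg (by omega : j - 1 < 0)]
    · obtain rfl : j = 0 := by omega
      simp [ichoose]
  rcases le_or_gt j N with h' | h'
  · obtain ⟨i, rfl⟩ : ∃ i : ℕ, j = i + 1 := ⟨(j - 1).toNat, by omega⟩
    have key := Nat.choose_succ_right_eq N i
    rw [add_sub_cancel_right, ← Nat.cast_succ i, ichoose_natCast, ichoose_natCast]
    zify [show i ≤ N by omega] at key
    push_cast
    linear_combination key
  · rw [ichoose_of_lt h']
    rcases eq_or_lt_of_le (show (N : ℤ) + 1 ≤ j by omega) with rfl | h''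
    · simp
    · simp [ichoose_of_lt (show (N : ℤ) < j - 1 by omega)]

def downCount (m : ℕ) (h : ℤ) : ℤ := ichoose (2 * m) (m - h) - ichoose (2 * m) (m - h - 2)

def upCount (m : ℕ) (k : ℤ) : ℤ :=
  ichoose (2 * m + 2) (m - k + 2) - ichoose (2 * m + 2) (m - k + 1)

lemma downCount_zero {h : ℤ} (hh : -1 ≤ h) : downCount 0 h = if h = 0 then 1 else 0 := by
  rcases (show h = -1 ∨ h = 0 ∨ 0 < h by omega) with rfl | rfl | hpos
  · simp [downCount, ichoose]
  · simp [downCount, ichoose]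
  · rw [downCount, if_neg hpos.ne', ichoose_of_neg (by omega), ichoose_of_neg (by omega)]
    rfl

lemma upCount_eq (m : ℕ) (k : ℤ) : upCount m k = downCount m (k - 1) + downCount m (k - 2) := by
  simp only [upCount, downCount, ichoose_succ]
  push_cast
  ring_nf

lemma downCount_succ (m : ℕ) (h : ℤ) :
    downCount (m + 1) h = upCount m (h + 1) + upCount m (h + 2) := by
  simp only [upCount, downCount]
  push_cast
  ring_nf

lemma downCount_succ_neg_one (m : ℕ) : downCount (m + 1) (-1) = 0 := by
  rw [downCount, sub_eq_zero, ← ichoose_symm]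
  push_cast
  ring_nf

lemma ncard_zigzagEndingUp_eq_add (m : ℕ) (k : ℤ) :
    (zigzagEndingUp m k).ncard =
      (zigzagEndingDown m (k - 1)).ncard + (zigzagEndingDown m (k - 2)).ncard := by
  rw [zigzagEndingUp_eq, ncard_image_concat_union_image_concat (by decide)
    (zigzagEndingDown_finite _ _) (zigzagEndingDown_finite _ _)]

lemma ncard_zigzagEndingDown_succ_eq_add (m : ℕ) {h : ℤ} (hh : 0 ≤ h) :
    (zigzagEndingDown (m + 1) h).ncard =
      (zigzagEndingUp m (h + 1)).ncard + (zigzagEndingUp m (h + 2)).ncard := by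
  rw [zigzagEndingDown_succ_eq m hh, ncard_image_concat_union_image_concat (by decide)
    (zigzagEndingUp_finite _ _) (zigzagEndingUp_finite _ _)]

theorem ncard_zigzagEndingDown (m : ℕ) {h : ℤ} (hh : -1 ≤ h) :
    ((zigzagEndingDown m h).ncard : ℤ) = downCount m h := by
  induction m generalizing h with
  | zero =>
    rw [zigzagEndingDown_zero, downCount_zero hh]
    split_ifs <;> simp
  | succ m ih =>
    have ncard_up (k : ℤ) (hk : 1 ≤ k) : ((zigzagEndingUp m k).ncard : ℤ) = upCount m k := by
      rw [ncard_zigzagEndingUp_eq_add, Nat.cast_add, ih (by omega), ih (by omega), upCount_eq]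
    rcases hh.eq_or_lt with rfl | hh
    · rw [zigzagEndingDown_of_neg _ (by norm_num), Set.ncard_empty, downCount_succ_neg_one]
      rfl
    · rw [ncard_zigzagEndingDown_succ_eq_add m (by omega), Nat.cast_add, ncard_up _ (by omega),
        ncard_up _ (by omega), downCount_succ]

theorem ncard_zigzagEndingUp (m : ℕ) {k : ℤ} (hk : 1 ≤ k) :
    ((zigzagEndingUp m k).ncard : ℤ) = upCount m k := by
  rw [ncard_zigzagEndingUp_eq_add, Nat.cast_add, ncard_zigzagEndingDown m (by omega),
    ncard_zigzagEndingDown m (by omega), upCount_eq]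

lemma ncard_zigzagEndingUp_mul (m : ℕ) {k : ℤ} (hk : 1 ≤ k) :
    ((zigzagEndingUp m k).ncard : ℤ) * (m + 1 + k) =
      (2 * k - 1) * ichoose (2 * (m + 1)) (m + 1 - k + 1) := by
  have h := mul_ichoose_sub_ichoose_sub_one (2 * (m + 1)) (m + 1 - k + 1)
  rw [ncard_zigzagEndingUp m hk, upCount]
  push_cast at h ⊢
  ring_nf at h ⊢
  linear_combination h

/-- partial zigzag knight's paths of length 2n−1 ending at height k
with an up last step are counted by ((2k−1)/(n+k))·binom(2n, n−k+1). -/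
theorem stmt3 (n k : ℕ) (hn : 1 ≤ n) (hk : 1 ≤ k) :
    (Nat.card {p : List (ℤ × ℤ) //
        IsPartialZigzag p ∧ p.length = 2 * n - 1 ∧ pathHeight p = k ∧ EndsWithUp p} : ℚ)
      = ((2 * k - 1 : ℚ) / (n + k)) * (ichoose (2 * n) ((n : ℤ) - k + 1) : ℚ) := by
  obtain ⟨m, rfl⟩ := Nat.exists_eq_add_of_le' hn
  have key := ncard_zigzagEndingUp_mul m (k := k) (by exact_mod_cast hk)
  rw [← Nat.card_coe_set_eq] at key
  rw [show 2 * (m + 1) - 1 = 2 * m + 1 by omega, div_mul_eq_mul_div,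
    eq_div_iff (by positivity)]
  push_cast
  exact_mod_cast key
end

section
/- Every non-empty zigzag knight's path ending on the x-axis decomposes uniquely into exactly one of the three forms: N N̄ β, E Ē β, or N Ē β E N̄ γ, where β and γ are (possibly empty) zigzag knight's paths ending on the x-axis, N=(1,2), N̄=(1,-2), E=(2,1), Ē=(2,-1). -/
open List

/-! The first step of a nonempty path goes up, the second goes down and the height after both
is nonnegative, which leaves N N̄, E Ē and N Ē. After N Ē the path is at height 1 and must come
back to 0; relative to that point, consider the shortest prefix `w` of the remainder that ends at
height -1. Its last step goes down from height ≥ 0 to -1 and the step before goes up from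
height ≥ 0, which forces `w = β E N̄` with `β` a path at height 0 that never goes below the axis.
Such a split is unique, because `β E N̄` ends below the axis and so is never a prefix of
another admissible `β'`. -/

@[simp] lemma pathHeight_nil : pathHeight [] = 0 := rfl

@[simp] lemma pathHeight_cons (a : ℤ × ℤ) (l : List (ℤ × ℤ)) :
    pathHeight (a :: l) = a.2 + pathHeight l := by
  simp [pathHeight]

@[simp] lemma pathHeight_append (l₁ l₂ : List (ℤ × ℤ)) :
    pathHeight (l₁ ++ l₂) = pathHeight l₁ + pathHeight l₂ := by
  simp [pathHeight]

lemma nonnegHeights_iff_prefix {p : List (ℤ × ℤ)} :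
    NonnegHeights p ↔ ∀ w, w <+: p → 0 ≤ pathHeight w := by
  refine ⟨fun h w hw => ?_, fun h i => h _ (take_prefix i p)⟩
  rw [prefix_iff_eq_take.mp hw]
  exact h _

lemma IsZigzagKnightPath.of_append {w v : List (ℤ × ℤ)} (hp : IsZigzagKnightPath (w ++ v))
    (hw : pathHeight w = 0) : IsZigzagKnightPath v := by
  obtain ⟨⟨⟨hsteps, hnn⟩, hz⟩, hh⟩ := hp
  refine ⟨⟨⟨fun s hs => hsteps s (mem_append_right w hs), ?_⟩, hz.right_of_append⟩, ?_⟩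
  · refine nonnegHeights_iff_prefix.mpr fun x hx => ?_
    simpa [hw] using nonnegHeights_iff_prefix.mp hnn (w ++ x) ((prefix_append_right_inj w).mpr hx)
  · simpa [hw] using hh

lemma IsZigzagKnightPath.exists_eq_cons_cons {p : List (ℤ × ℤ)} (hp : IsZigzagKnightPath p)
    (hne : p ≠ []) : ∃ u, p = Nstep :: Nbar :: u ∨ p = Estep :: Ebar :: u ∨
      p = Nstep :: Ebar :: u := by
  obtain ⟨⟨⟨hsteps, hnn⟩, hz⟩, hh⟩ := hp
  have hstep : ∀ s ∈ p, s = (2, 1) ∨ s = (2, -1) ∨ s = (1, 2) ∨ s = (1, -2) := hsteps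
  rcases p with _ | ⟨a, _ | ⟨b, u⟩⟩
  · exact absurd rfl hne
  · rcases hstep a (by simp) with rfl | rfl | rfl | rfl <;> simp at hh
  · have hab : a.2 * b.2 < 0 := (isChain_cons_cons.mp hz).1
    have h₁ : 0 ≤ a.2 := by simpa using hnn 1
    have h₂ : 0 ≤ a.2 + b.2 := by simpa using hnn 2
    refine ⟨u, ?_⟩
    rcases hstep a (by simp) with rfl | rfl | rfl | rfl <;>
      rcases hstep b (by simp) with rfl | rfl | rfl | rfl <;>
      simp_all [Nstep, Nbar, Estep, Ebar]

lemma steps_eq_Estep_Nbar_of_reach_neg_one {x y : ℤ × ℤ} {h : ℤ} (hx : x ∈ KnightSteps)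
    (hy : y ∈ KnightSteps) (hxy : x.2 * y.2 < 0) (h₀ : 0 ≤ h) (h₁ : 0 ≤ h + x.2)
    (h₂ : h + x.2 + y.2 = -1) : x = Estep ∧ y = Nbar ∧ h = 0 := by
  simp only [KnightSteps, Set.mem_insert_iff, Set.mem_singleton_iff] at hx hy
  rcases hx with rfl | rfl | rfl | rfl <;> rcases hy with rfl | rfl | rfl | rfl <;>
    simp_all [Estep, Nbar] <;> omega

lemma exists_split_of_Nstep_Ebar {u : List (ℤ × ℤ)}
    (hp : IsZigzagKnightPath (Nstep :: Ebar :: u)) :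
    ∃ β γ, IsZigzagKnightPath β ∧ u = β ++ Estep :: Nbar :: γ := by
  obtain ⟨⟨⟨hsteps, hnn⟩, hz⟩, hh⟩ := hp
  have hu_lb : ∀ w, w <+: u → -1 ≤ pathHeight w := fun w hw => by
    have := nonnegHeights_iff_prefix.mp hnn (Nstep :: Ebar :: w) (by simpa using hw)
    simp only [pathHeight_cons, Nstep, Ebar] at this
    omega
  -- `w` is the shortest prefix of `u` ending at height -1
  obtain ⟨w, ⟨hwu, hw⟩, hmin⟩ := (measure List.length).wf.has_min
    {w | w <+: u ∧ pathHeight w = -1}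
    ⟨u, prefix_refl u, by simp only [pathHeight_cons, Nstep, Ebar] at hh; omega⟩
  have hpos : ∀ v, v <+: w → v.length < w.length → 0 ≤ pathHeight v := fun v hv hlt => by
    have hvu := hv.trans hwu
    have : pathHeight v ≠ -1 := fun h => hmin v ⟨hvu, h⟩ hlt
    have := hu_lb v hvu
    omega
  obtain ⟨β, x, y, rfl⟩ : ∃ β x y, w = β ++ [x, y] := by
    rcases w.eq_nil_or_concat with rfl | ⟨w', y, rfl⟩
    · simp at hw
    rcases w'.eq_nil_or_concat with rfl | ⟨β, x, rfl⟩
    · -- `y` would be the first step of `u`, which follows `Ebar` and so goes up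
      obtain ⟨γ, rfl⟩ := hwu
      have := (isChain_cons_cons.mp (isChain_cons_cons.mp hz).2).1
      simp_all [Ebar]
    exact ⟨β, x, y, by simp⟩
  obtain ⟨γ, rfl⟩ := hwu
  have hxy : x.2 * y.2 < 0 :=
    (isChain_pair (R := fun a b : ℤ × ℤ => a.2 * b.2 < 0)).mp
      (hz.infix ⟨Nstep :: Ebar :: β, γ, by simp⟩)
  obtain ⟨rfl, rfl, hβ⟩ := steps_eq_Estep_Nbar_of_reach_neg_one
    (hsteps x (by simp)) (hsteps y (by simp)) hxy
    (hpos β (by simp [prefix_append]) (by simp))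
    (by simpa using hpos (β ++ [x]) ⟨[y], by simp⟩ (by simp))
    (by simp at hw; omega)
  refine ⟨β, γ, ⟨⟨⟨fun s hs => hsteps s (by simp [hs]), ?_⟩, ?_⟩, hβ⟩, by simp⟩
  · exact nonnegHeights_iff_prefix.mpr fun v hv =>
      hpos v (hv.trans (prefix_append _ _)) (by simpa using hv.length_le.trans_lt (by simp))
  · exact hz.infix ⟨[Nstep, Ebar], [Estep, Nbar] ++ γ, by simp⟩

lemma eq_nil_of_append_Estep_Nbar_eq {β β' a γ γ' : List (ℤ × ℤ)} (hβ : pathHeight β = 0)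
    (hβ' : NonnegHeights β') (hβa : β' = β ++ a)
    (h : Estep :: Nbar :: γ = a ++ Estep :: Nbar :: γ') : a = [] := by
  rcases a with _ | ⟨x, _ | ⟨z, a⟩⟩
  · rfl
  · simp [Estep, Nbar] at h
  · simp only [cons_append, cons.injEq] at h
    obtain ⟨rfl, rfl, -⟩ := h
    have := nonnegHeights_iff_prefix.mp hβ' (β ++ [Estep, Nbar]) ⟨a, by simp [hβa]⟩
    simp [hβ, Estep, Nbar] at this

lemma append_Estep_Nbar_inj {β₁ β₂ γ₁ γ₂ : List (ℤ × ℤ)}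
    (hβ₁ : NonnegHeights β₁) (hβ₁' : pathHeight β₁ = 0)
    (hβ₂ : NonnegHeights β₂) (hβ₂' : pathHeight β₂ = 0)
    (h : β₁ ++ Estep :: Nbar :: γ₁ = β₂ ++ Estep :: Nbar :: γ₂) : β₁ = β₂ ∧ γ₁ = γ₂ := by
  rcases append_eq_append_iff.mp h with ⟨a, hβa, ha⟩ | ⟨a, hβa, ha⟩
  · obtain rfl := eq_nil_of_append_Estep_Nbar_eq hβ₁' hβ₂ hβa ha
    simpa [hβa] using ha
  · obtain rfl := eq_nil_of_append_Estep_Nbar_eq hβ₂' hβ₁ hβa ha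
    simpa [hβa] using ha.symm

lemma existsUnique_split_of_Nstep_Ebar {u : List (ℤ × ℤ)}
    (hp : IsZigzagKnightPath (Nstep :: Ebar :: u)) :
    ∃! βγ : List (ℤ × ℤ) × List (ℤ × ℤ), IsZigzagKnightPath βγ.1 ∧ IsZigzagKnightPath βγ.2 ∧
      u = βγ.1 ++ Estep :: Nbar :: βγ.2 := by
  obtain ⟨β, γ, hβ, rfl⟩ := exists_split_of_Nstep_Ebar hp
  have hγ : IsZigzagKnightPath γ :=
    IsZigzagKnightPath.of_append (w := Nstep :: Ebar :: β ++ [Estep, Nbar]) (by simpa using hp)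
      (by simp [hβ.2, Nstep, Ebar, Estep, Nbar])
  refine ⟨(β, γ), ⟨hβ, hγ, rfl⟩, ?_⟩
  rintro ⟨β', γ'⟩ ⟨hβ', -, h⟩
  obtain ⟨rfl, rfl⟩ := append_Estep_Nbar_inj hβ'.1.1.2 hβ'.2 hβ.1.1.2 hβ.2 h.symm
  rfl

/-- every non-empty zigzag knight's path ending on the x-axis
decomposes uniquely into exactly one of the forms N N̄ β, E Ē β, N Ē β E N̄ γ
with β, γ zigzag knight's paths ending on the x-axis. -/
theorem stmt6 (p : List (ℤ × ℤ)) (hp : IsZigzagKnightPath p) (hne : p ≠ []) :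
    ((∃! β, IsZigzagKnightPath β ∧ p = Nstep :: Nbar :: β) ∧
      ¬ (∃ β, IsZigzagKnightPath β ∧ p = Estep :: Ebar :: β) ∧
      ¬ (∃ βγ : List (ℤ × ℤ) × List (ℤ × ℤ), IsZigzagKnightPath βγ.1 ∧
            IsZigzagKnightPath βγ.2 ∧ p = Nstep :: Ebar :: (βγ.1 ++ Estep :: Nbar :: βγ.2)))
    ∨
    ((∃! β, IsZigzagKnightPath β ∧ p = Estep :: Ebar :: β) ∧
      ¬ (∃ β, IsZigzagKnightPath β ∧ p = Nstep :: Nbar :: β) ∧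
      ¬ (∃ βγ : List (ℤ × ℤ) × List (ℤ × ℤ), IsZigzagKnightPath βγ.1 ∧
            IsZigzagKnightPath βγ.2 ∧ p = Nstep :: Ebar :: (βγ.1 ++ Estep :: Nbar :: βγ.2)))
    ∨
    ((∃! βγ : List (ℤ × ℤ) × List (ℤ × ℤ), IsZigzagKnightPath βγ.1 ∧
          IsZigzagKnightPath βγ.2 ∧ p = Nstep :: Ebar :: (βγ.1 ++ Estep :: Nbar :: βγ.2)) ∧
      ¬ (∃ β, IsZigzagKnightPath β ∧ p = Nstep :: Nbar :: β) ∧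
      ¬ (∃ β, IsZigzagKnightPath β ∧ p = Estep :: Ebar :: β)) := by
  have tail : ∀ {a b u}, p = a :: b :: u → a.2 + b.2 = 0 → IsZigzagKnightPath u :=
    fun hpu hab => (hpu ▸ hp).of_append (w := [_, _]) (by simpa using hab)
  obtain ⟨u, hpu | hpu | hpu⟩ := hp.exists_eq_cons_cons hne <;> subst hpu
  · refine Or.inl ⟨⟨u, ⟨tail rfl rfl, rfl⟩, fun β hβ => ?_⟩, ?_, ?_⟩ <;>
      simp_all [Nstep, Nbar, Estep, Ebar]
  · refine Or.inr (Or.inl ⟨⟨u, ⟨tail rfl rfl, rfl⟩, fun β hβ => ?_⟩, ?_, ?_⟩) <;>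
      simp_all [Nstep, Nbar, Estep, Ebar]
  · refine Or.inr (Or.inr ⟨?_, ?_, ?_⟩)
    · simpa only [cons.injEq, true_and] using existsUnique_split_of_Nstep_Ebar hp
    all_goals simp [Nstep, Nbar, Estep, Ebar]
end

section
/- For every n ≥ 0, the number of zigzag knight's paths of size 2n ending on the x-axis equals the number of peakless Motzkin paths of length n+1 (the generalized Catalan number); in particular for n = 0,…,10 these numbers are 1, 1, 2, 4, 8, 17, 37, 82, 185, 423, 978. Moreover, there is no zigzag knight's path of odd size ending on the x-axis. -/
open List

/-- A peakless Motzkin path, encoded as a list of steps `1 = U`, `-1 = D`, `0 = F`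
with nonnegative partial sums, ending at height 0, and with no factor `UD`. -/
def IsPeaklessMotzkin (m : List ℤ) : Prop :=
  (∀ x ∈ m, x = 1 ∨ x = -1 ∨ x = 0) ∧ (∀ i, 0 ≤ (m.take i).sum) ∧ m.sum = 0 ∧
    List.Chain' (fun a b => ¬ (a = 1 ∧ b = -1)) m

/-- The number of zigzag knight's paths of size s ending on the x-axis. -/
noncomputable def zigzagCount (s : ℤ) : ℕ :=
  Nat.card {p : List (ℤ × ℤ) // IsZigzagKnightPath p ∧ pathSize p = s}

/-!
Both families are generated by the grammar `T = ε | x T | x² T | x³ T T`. Cut at its first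
return to the axis, a zigzag path ending on the axis is empty or one of `N N̄ P`, `E Ē P`,
`N Ē P E N̄ P'`, of half-sizes `0`, `1 + w`, `2 + w`, `3 + w + w'`; a nonempty peakless Motzkin
path is `F`, `F P`, `U P D` or `U P D P'` with `P` nonempty (there is no peak), and its length
minus one obeys the same rule. Both are thus in graded bijection with the derivation trees of
the grammar, which gives the equality and the evenness of sizes; splitting a tree at its root
gives `T(n+3) = T(n+2) + T(n+1) + ∑_{i+j=n} T(i) T(j)`, from which the values are computed.
-/

namespace ZigzagKnight

def StaysNonneg (h : ℤ) (l : List ℤ) : Prop :=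
  ∀ i, 0 ≤ h + (l.take i).sum

section StaysNonneg

variable {h a : ℤ} {l l₁ l₂ : List ℤ}

@[simp]
theorem staysNonneg_nil : StaysNonneg h [] ↔ 0 ≤ h := by
  simp [StaysNonneg]

@[simp]
theorem staysNonneg_cons : StaysNonneg h (a :: l) ↔ 0 ≤ h ∧ StaysNonneg (h + a) l := by
  unfold StaysNonneg
  rw [← Nat.and_forall_add_one]
  simp [add_assoc]

theorem StaysNonneg.nonneg (hl : StaysNonneg h l) : 0 ≤ h := by
  simpa using hl 0

theorem StaysNonneg.mono {h' : ℤ} (hl : StaysNonneg h l) (hh : h ≤ h') : StaysNonneg h' l :=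
  fun i => by linarith [hl i]

@[simp]
theorem staysNonneg_append :
    StaysNonneg h (l₁ ++ l₂) ↔ StaysNonneg h l₁ ∧ StaysNonneg (h + l₁.sum) l₂ := by
  induction l₁ generalizing h with
  | nil => simpa using fun hl => hl.nonneg
  | cons a l₁ ih => simp [ih, add_assoc, and_assoc]

theorem exists_first_return {H : ℤ} (hH : 1 ≤ H) :
    ∀ {t : List ℤ}, (∀ x ∈ t, -1 ≤ x) → H + t.sum ≤ 0 →
      ∃ q r, t = q ++ -1 :: r ∧ StaysNonneg (H - 1) q ∧ H - 1 + q.sum = 0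
  | [], _, hsum => by simp at hsum; omega
  | a :: t, hstep, hsum => by
    have ha : -1 ≤ a := hstep a mem_cons_self
    by_cases hret : H + a = 0
    · obtain ⟨rfl, rfl⟩ : a = -1 ∧ H = 1 := by omega
      exact ⟨[], t, rfl, by simp, by simp⟩
    · obtain ⟨q, r, rfl, hq, hqs⟩ := exists_first_return (H := H + a) (by omega)
        (fun x hx => hstep x (mem_cons_of_mem a hx)) (by simp at hsum; omega)
      refine ⟨a :: q, r, rfl, ?_, ?_⟩
      · simpa [show H - 1 + a = H + a - 1 by ring] using ⟨by omega, hq⟩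
      · simp; omega

end StaysNonneg

section Grading

open Finset

variable {α β : Type*} (f : α → ℕ) (g : β → ℕ)

def addFiberEquiv (n : ℕ) :
    {x : α × β // f x.1 + g x.2 = n} ≃
      Σ p : antidiagonal n, {a // f a = p.1.1} × {b // g b = p.1.2} where
  toFun x := ⟨⟨(f x.1.1, g x.1.2), mem_antidiagonal.2 x.2⟩, ⟨x.1.1, rfl⟩, ⟨x.1.2, rfl⟩⟩
  invFun y := ⟨(y.2.1.1, y.2.2.1), by
    rw [y.2.1.2, y.2.2.2]
    exact mem_antidiagonal.1 y.1.2⟩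
  left_inv _ := rfl
  right_inv := by
    rintro ⟨⟨⟨i, j⟩, hp⟩, ⟨a, ha⟩, ⟨b, hb⟩⟩
    dsimp only at ha hb
    subst ha hb
    rfl

variable [∀ k, Finite {a // f a = k}] [∀ k, Finite {b // g b = k}]

instance finite_addFiber (n : ℕ) : Finite {x : α × β // f x.1 + g x.2 = n} :=
  Finite.of_equiv _ (addFiberEquiv f g n).symm

theorem card_addFiber (n : ℕ) :
    Nat.card {x : α × β // f x.1 + g x.2 = n} =
      ∑ p ∈ antidiagonal n, Nat.card {a // f a = p.1} * Nat.card {b // g b = p.2} := by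
  rw [Nat.card_congr (addFiberEquiv f g n), Nat.card_sigma,
    ← sum_coe_sort (antidiagonal n)]
  simp only [Nat.card_prod]

end Grading

theorem finite_setOf_length_eq_forall_mem {α : Type*} {s : Set α} (hs : s.Finite) (n : ℕ) :
    {l : List α | l.length = n ∧ ∀ x ∈ l, x ∈ s}.Finite := by
  have := hs.to_subtype
  refine ((List.finite_length_eq s n).image (map Subtype.val)).subset ?_
  rintro l ⟨rfl, hl⟩
  exact ⟨l.pmap Subtype.mk hl, by simp, by simp [map_pmap]⟩

theorem isZigzag_iff {p : List (ℤ × ℤ)} :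
    IsZigzag p ↔ IsChain (fun a b : ℤ × ℤ => a.2 * b.2 < 0) p := Iff.rfl

theorem isZigzagKnightPath_iff {p : List (ℤ × ℤ)} :
    IsZigzagKnightPath p ↔ (∀ s ∈ p, s ∈ KnightSteps) ∧ StaysNonneg 0 (p.map Prod.snd) ∧
      IsZigzag p ∧ (p.map Prod.snd).sum = 0 := by
  simp [IsZigzagKnightPath, IsPartialZigzag, IsPartialKnight, NonnegHeights, StaysNonneg,
    pathHeight, map_take, and_assoc]

theorem isPeaklessMotzkin_iff {m : List ℤ} :
    IsPeaklessMotzkin m ↔ (∀ x ∈ m, x = 1 ∨ x = -1 ∨ x = 0) ∧ StaysNonneg 0 m ∧ m.sum = 0 ∧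
      IsChain (fun a b : ℤ => ¬(a = 1 ∧ b = -1)) m := by
  simp only [IsPeaklessMotzkin, StaysNonneg, zero_add]
  rfl

instance finite_peaklessMotzkin (n : ℕ) :
    Finite {m : List ℤ // IsPeaklessMotzkin m ∧ m.length = n} :=
  Set.Finite.to_subtype <| (finite_setOf_length_eq_forall_mem (s := {1, -1, 0}) (by simp) n).subset
    fun m ⟨hm, hlen⟩ => ⟨hlen, by simpa using (isPeaklessMotzkin_iff.1 hm).1⟩

@[simp] theorem estep_mem_knightSteps : Estep ∈ KnightSteps := by simp [KnightSteps, Estep]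
@[simp] theorem ebar_mem_knightSteps : Ebar ∈ KnightSteps := by simp [KnightSteps, Ebar]
@[simp] theorem nstep_mem_knightSteps : Nstep ∈ KnightSteps := by simp [KnightSteps, Nstep]
@[simp] theorem nbar_mem_knightSteps : Nbar ∈ KnightSteps := by simp [KnightSteps, Nbar]

theorem snd_ne_zero_of_mem_knightSteps {s : ℤ × ℤ} (hs : s ∈ KnightSteps) : s.2 ≠ 0 := by
  rcases hs with rfl | rfl | rfl | rfl <;> simp

theorem eq_of_mem_knightSteps_of_pos {s : ℤ × ℤ} (hs : s ∈ KnightSteps) (h : 0 < s.2) :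
    s = Estep ∨ s = Nstep := by
  rcases hs with rfl | rfl | rfl | rfl <;> simp_all [Estep, Nstep]

theorem eq_of_mem_knightSteps_of_neg {s : ℤ × ℤ} (hs : s ∈ KnightSteps) (h : s.2 < 0) :
    s = Ebar ∨ s = Nbar := by
  rcases hs with rfl | rfl | rfl | rfl <;> simp_all [Ebar, Nbar]

theorem isZigzag_cons_cons {a b : ℤ × ℤ} {L : List (ℤ × ℤ)} (ha : 0 < a.2) (hb : b.2 < 0)
    (hL : IsZigzag L) (hLup : ∀ s ∈ L.head?, 0 < s.2) : IsZigzag (a :: b :: L) := by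
  rw [isZigzag_iff, isChain_cons_cons, isChain_cons]
  exact ⟨mul_neg_of_pos_of_neg ha hb, fun s hs => mul_neg_of_neg_of_pos hb (hLup s hs), hL⟩

theorem pair_cases_of_isZigzag {a b : ℤ × ℤ} {t : List (ℤ × ℤ)}
    (hk : ∀ s ∈ a :: b :: t, s ∈ KnightSteps) (hz : IsZigzag (a :: b :: t)) (ha : 0 < a.2) :
    (a = Estep ∨ a = Nstep) ∧ (b = Ebar ∨ b = Nbar) ∧ IsZigzag t ∧ ∀ s ∈ t.head?, 0 < s.2 := by
  rw [isZigzag_iff, isChain_cons_cons, isChain_cons] at hz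
  obtain ⟨hab, hbt, hzt⟩ := hz
  have hb : b.2 < 0 := neg_of_mul_neg_right hab ha.le
  exact ⟨eq_of_mem_knightSteps_of_pos (hk a (by simp)) ha,
    eq_of_mem_knightSteps_of_neg (hk b (by simp)) hb, hzt,
    fun s hs => pos_of_mul_neg_right (hbt s hs) hb.le⟩

/-- A pair (up-step, down-step) changes the height by at least `-1`, and only `E N̄` from
height `1` reaches `0`. -/
theorem exists_zigzag_first_return {H : ℤ} (hH : 1 ≤ H) :
    ∀ {t : List (ℤ × ℤ)}, (∀ s ∈ t, s ∈ KnightSteps) → IsZigzag t →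
      (∀ s ∈ t.head?, 0 < s.2) → H + (t.map Prod.snd).sum = 0 →
      ∃ q r, t = q ++ Estep :: Nbar :: r ∧ StaysNonneg (H - 1) (q.map Prod.snd) ∧
        H - 1 + (q.map Prod.snd).sum = 0
  | [], _, _, _, hsum => by simp at hsum; omega
  | [a], _, _, hup, hsum => by simp at hup hsum; omega
  | a :: b :: t, hk, hz, hup, hsum => by
    obtain ⟨ha, hb, hzt, hup'⟩ := pair_cases_of_isZigzag hk hz (by simpa using hup)
    by_cases hret : a = Estep ∧ b = Nbar ∧ H = 1
    · obtain ⟨rfl, rfl, rfl⟩ := hret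
      exact ⟨[], t, rfl, by simp, by simp⟩
    · have hpair : 1 ≤ H + a.2 + b.2 := by
        rcases ha with rfl | rfl <;> rcases hb with rfl | rfl <;>
          simp_all [Estep, Nstep, Ebar, Nbar] <;> omega
      obtain ⟨q, r, rfl, hq, hqs⟩ := exists_zigzag_first_return hpair
        (fun s hs => hk s (by simp [hs])) hzt hup' (by simp at hsum; linarith)
      refine ⟨a :: b :: q, r, rfl, ?_, ?_⟩
      · simpa [show H - 1 + a.2 + b.2 = H + a.2 + b.2 - 1 by ring] using
          ⟨by omega, by rcases ha with rfl | rfl <;> simp [Estep, Nstep] <;> omega, hq⟩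
      · simp; linarith

inductive PathTree : Type
  | leaf : PathTree
  | narrow : PathTree → PathTree
  | wide : PathTree → PathTree
  | arch : PathTree → PathTree → PathTree

namespace PathTree

def weight : PathTree → ℕ
  | leaf => 0
  | narrow t => t.weight + 1
  | wide t => t.weight + 2
  | arch s t => s.weight + t.weight + 3

def toZigzag : PathTree → List (ℤ × ℤ)
  | leaf => []
  | narrow t => Nstep :: Nbar :: t.toZigzag
  | wide t => Estep :: Ebar :: t.toZigzag
  | arch s t => Nstep :: Ebar :: (s.toZigzag ++ Estep :: Nbar :: t.toZigzag)

def toMotzkin : PathTree → List ℤ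
  | leaf => [0]
  | narrow t => 0 :: t.toMotzkin
  | wide t => 1 :: (t.toMotzkin ++ [-1])
  | arch s t => 1 :: (s.toMotzkin ++ -1 :: t.toMotzkin)

section Zigzag

@[simp]
theorem sum_snd_toZigzag (c : PathTree) : (c.toZigzag.map Prod.snd).sum = 0 := by
  induction c <;> simp_all [toZigzag, Estep, Ebar, Nstep, Nbar]

theorem pathSize_toZigzag (c : PathTree) : pathSize c.toZigzag = 2 * c.weight := by
  induction c <;> simp_all [toZigzag, weight, pathSize, Estep, Ebar, Nstep, Nbar] <;> ring

theorem mem_knightSteps_of_mem_toZigzag (c : PathTree) : ∀ s ∈ c.toZigzag, s ∈ KnightSteps := by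
  induction c <;> simp_all [toZigzag, or_imp]

theorem staysNonneg_toZigzag (c : PathTree) : StaysNonneg 0 (c.toZigzag.map Prod.snd) := by
  induction c with
  | leaf => simp [toZigzag]
  | narrow t ih => simpa [toZigzag, Nstep, Nbar] using ih
  | wide t ih => simpa [toZigzag, Estep, Ebar] using ih
  | arch s t ihs iht =>
    simpa [toZigzag, Estep, Ebar, Nstep, Nbar] using ⟨ihs.mono zero_le_one, iht⟩

theorem head_toZigzag_append (c : PathTree) {L : List (ℤ × ℤ)} (hL : ∀ s ∈ L.head?, 0 < s.2) :
    ∀ s ∈ (c.toZigzag ++ L).head?, 0 < s.2 := by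
  cases c <;> simp_all [toZigzag, Estep, Nstep]

/-- A nonempty `c.toZigzag` ends with a down-step. -/
theorem isZigzag_toZigzag_append (c : PathTree) {L : List (ℤ × ℤ)} (hL : IsZigzag L)
    (hLup : ∀ s ∈ L.head?, 0 < s.2) : IsZigzag (c.toZigzag ++ L) := by
  induction c generalizing L with
  | leaf => exact hL
  | narrow t ih =>
    exact isZigzag_cons_cons (by simp [Nstep]) (by simp [Nbar]) (ih hL hLup)
      (t.head_toZigzag_append hLup)
  | wide t ih =>
    exact isZigzag_cons_cons (by simp [Estep]) (by simp [Ebar]) (ih hL hLup)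
      (t.head_toZigzag_append hLup)
  | arch s t ihs iht =>
    have hup : ∀ x ∈ (Estep :: Nbar :: (t.toZigzag ++ L)).head?, 0 < x.2 := by simp [Estep]
    simp only [toZigzag, cons_append, append_assoc]
    exact isZigzag_cons_cons (by simp [Nstep]) (by simp [Ebar])
      (ihs (isZigzag_cons_cons (by simp [Estep]) (by simp [Nbar]) (iht hL hLup)
        (t.head_toZigzag_append hLup)) hup) (s.head_toZigzag_append hup)

theorem isZigzagKnightPath_toZigzag (c : PathTree) : IsZigzagKnightPath c.toZigzag :=
  isZigzagKnightPath_iff.2 ⟨c.mem_knightSteps_of_mem_toZigzag, c.staysNonneg_toZigzag,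
    by simpa using c.isZigzag_toZigzag_append (L := []) (by simp [isZigzag_iff]) (by simp),
    c.sum_snd_toZigzag⟩

/-- `c.toZigzag` never starts with `E N̄`. -/
theorem toZigzag_append_inj {c₁ c₂ : PathTree} {r₁ r₂ : List (ℤ × ℤ)}
    (h : c₁.toZigzag ++ Estep :: Nbar :: r₁ = c₂.toZigzag ++ Estep :: Nbar :: r₂) :
    c₁ = c₂ ∧ r₁ = r₂ := by
  induction c₁ generalizing c₂ r₁ r₂ with
  | leaf => cases c₂ <;> simp_all [toZigzag, Estep, Ebar, Nstep, Nbar]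
  | narrow t ih | wide t ih =>
    cases c₂ <;> simp [toZigzag, Estep, Ebar, Nstep, Nbar] at h ⊢
    exact ih h
  | arch s t ihs iht =>
    cases c₂ <;> simp [toZigzag, Estep, Ebar, Nstep, Nbar] at h ⊢
    obtain ⟨rfl, hrest⟩ := ihs h
    obtain ⟨rfl, rfl⟩ := iht hrest
    simp

theorem toZigzag_injective : Function.Injective toZigzag := fun c₁ c₂ h =>
  (toZigzag_append_inj (r₁ := []) (r₂ := []) (by rw [h])).1

theorem exists_toZigzag_eq {p : List (ℤ × ℤ)} (hp : IsZigzagKnightPath p) :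
    ∃ c : PathTree, c.toZigzag = p := by
  induction hn : p.length using Nat.strong_induction_on generalizing p with
  | _ n ih =>
  subst hn
  obtain ⟨hk, hnn, hz, hsum⟩ := isZigzagKnightPath_iff.1 hp
  rcases p with _ | ⟨a, _ | ⟨b, t⟩⟩
  · exact ⟨leaf, rfl⟩
  · exact absurd (by simpa using hsum) (snd_ne_zero_of_mem_knightSteps (hk a (by simp)))
  simp only [map_cons, staysNonneg_cons, zero_add] at hnn
  obtain ⟨ha, hb, hzt, hup⟩ := pair_cases_of_isZigzag hk hz
    (lt_of_le_of_ne hnn.2.1 (snd_ne_zero_of_mem_knightSteps (hk a (by simp))).symm)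
  have hkt : ∀ s ∈ t, s ∈ KnightSteps := fun s hs => hk s (by simp [hs])
  have htail (hflat : a.2 + b.2 = 0) : IsZigzagKnightPath t := by
    refine isZigzagKnightPath_iff.2 ⟨hkt, ?_, hzt, ?_⟩
    · simpa [hflat] using hnn.2.2
    · simp at hsum; linarith
  rcases ha with rfl | rfl <;> rcases hb with rfl | rfl
  · obtain ⟨c, rfl⟩ := ih _ (by simp) (htail (by simp [Estep, Ebar])) rfl
    exact ⟨wide c, rfl⟩
  · exact absurd hnn.2.2.nonneg (by simp [Estep, Nbar])
  · obtain ⟨q, r, rfl, hq, hqs⟩ := exists_zigzag_first_return (H := 1) le_rfl hkt hzt hup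
      (by simp [Nstep, Ebar] at hsum; linarith)
    simp only [sub_self, zero_add] at hq hqs
    rw [isZigzag_iff, isChain_append, isChain_cons_cons, isChain_cons] at hzt
    have hr := hnn.2.2
    simp only [Nstep, Ebar, Estep, Nbar, Int.reduceNeg, Int.reduceAdd, map_append, map_cons,
      staysNonneg_append, staysNonneg_cons, sum_append, sum_cons, hqs, add_zero, zero_add,
      zero_le_one, Nat.ofNat_nonneg, add_neg_cancel, neg_add_cancel_left, add_neg_cancel_left,
      true_and] at hr hsum
    obtain ⟨cq, rfl⟩ := ih q.length (by simp; omega) (isZigzagKnightPath_iff.2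
      ⟨fun s hs => hkt s (by simp [hs]), hq, hzt.1, hqs⟩) rfl
    obtain ⟨cr, rfl⟩ := ih r.length (by simp; omega) (isZigzagKnightPath_iff.2
      ⟨fun s hs => hkt s (by simp [hs]), hr.2, hzt.2.1.2.2, by linarith⟩) rfl
    exact ⟨arch cq cr, rfl⟩
  · obtain ⟨c, rfl⟩ := ih _ (by simp) (htail (by simp [Nstep, Nbar])) rfl
    exact ⟨narrow c, rfl⟩

end Zigzag

section Motzkin

@[simp]
theorem length_toMotzkin (c : PathTree) : c.toMotzkin.length = c.weight + 1 := by
  induction c <;> simp_all [toMotzkin, weight]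
  omega

@[simp]
theorem sum_toMotzkin (c : PathTree) : c.toMotzkin.sum = 0 := by
  induction c <;> simp_all [toMotzkin]

theorem mem_toMotzkin (c : PathTree) : ∀ x ∈ c.toMotzkin, x = 1 ∨ x = -1 ∨ x = 0 := by
  induction c <;> simp_all [toMotzkin, or_imp]

theorem staysNonneg_toMotzkin (c : PathTree) : StaysNonneg 0 c.toMotzkin := by
  induction c with
  | leaf => simp [toMotzkin]
  | narrow t ih => simpa [toMotzkin] using ih
  | wide t ih => simpa [toMotzkin] using ih.mono zero_le_one
  | arch s t ihs iht => simpa [toMotzkin] using ⟨ihs.mono zero_le_one, iht⟩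

theorem exists_toMotzkin_eq_cons (c : PathTree) : ∃ x l, c.toMotzkin = x :: l ∧ 0 ≤ x := by
  cases c <;> simp [toMotzkin]

/-- `c.toMotzkin` starts with `F` or `U` and ends with `F` or `D`. -/
theorem isChain_toMotzkin_append (c : PathTree) {L : List ℤ}
    (hL : IsChain (fun a b : ℤ => ¬(a = 1 ∧ b = -1)) L) :
    IsChain (fun a b : ℤ => ¬(a = 1 ∧ b = -1)) (c.toMotzkin ++ L) := by
  induction c generalizing L with
  | leaf => simpa [toMotzkin, isChain_cons] using hL
  | narrow t ih => simpa [toMotzkin, isChain_cons] using ih hL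
  | wide t ih =>
    obtain ⟨x, l, hxl, hx⟩ := t.exists_toMotzkin_eq_cons
    have := ih (L := [-1] ++ L) (by simpa [isChain_cons] using hL)
    simp_all [toMotzkin, isChain_cons]
    omega
  | arch s t ihs iht =>
    obtain ⟨x, l, hxl, hx⟩ := s.exists_toMotzkin_eq_cons
    have := ihs (L := -1 :: (t.toMotzkin ++ L)) (by simpa [isChain_cons] using iht hL)
    simp_all [toMotzkin, isChain_cons]
    omega

theorem isPeaklessMotzkin_toMotzkin (c : PathTree) : IsPeaklessMotzkin c.toMotzkin :=
  isPeaklessMotzkin_iff.2 ⟨c.mem_toMotzkin, c.staysNonneg_toMotzkin, c.sum_toMotzkin,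
    by simpa using c.isChain_toMotzkin_append (L := []) isChain_nil⟩

theorem neg_one_cons_ne_toMotzkin_append (c : PathTree) (r L : List ℤ) :
    -1 :: r ≠ c.toMotzkin ++ L := by
  obtain ⟨x, l, hxl, hx⟩ := c.exists_toMotzkin_eq_cons
  simp only [hxl, cons_append, ne_eq, cons.injEq, not_and]
  omega

theorem toMotzkin_append_inj {c₁ c₂ : PathTree} {r₁ r₂ : List ℤ}
    (h : c₁.toMotzkin ++ -1 :: r₁ = c₂.toMotzkin ++ -1 :: r₂) : c₁ = c₂ ∧ r₁ = r₂ := by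
  induction c₁ generalizing c₂ r₁ r₂ with
  | leaf =>
    cases c₂ <;> simp [toMotzkin] at h ⊢
    · exact h
    · exact neg_one_cons_ne_toMotzkin_append _ _ _ h
  | narrow t ih =>
    cases c₂ <;> simp [toMotzkin] at h ⊢
    · exact neg_one_cons_ne_toMotzkin_append _ _ _ h.symm
    · exact ih h
  | wide t ih =>
    cases c₂ <;> simp [toMotzkin] at h ⊢
    · simpa using ih h
    · obtain ⟨rfl, hrest⟩ := ih h
      exact neg_one_cons_ne_toMotzkin_append _ _ _ hrest
  | arch s t ihs iht =>
    cases c₂ <;> simp [toMotzkin] at h ⊢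
    · obtain ⟨rfl, hrest⟩ := ihs h
      exact neg_one_cons_ne_toMotzkin_append _ _ _ hrest.symm
    · obtain ⟨rfl, hrest⟩ := ihs h
      simpa using iht hrest

theorem toMotzkin_injective : Function.Injective toMotzkin := fun c₁ c₂ h =>
  (toMotzkin_append_inj (r₁ := []) (r₂ := []) (by rw [h])).1

theorem exists_toMotzkin_eq {m : List ℤ} (hm : IsPeaklessMotzkin m) (hne : m ≠ []) :
    ∃ c : PathTree, c.toMotzkin = m := by
  induction hn : m.length using Nat.strong_induction_on generalizing m with
  | _ n ih =>
  subst hn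
  obtain ⟨hmem, hnn, hsum, hch⟩ := isPeaklessMotzkin_iff.1 hm
  obtain ⟨x, t, rfl⟩ := exists_cons_of_ne_nil hne
  simp only [staysNonneg_cons, zero_add] at hnn
  simp only [sum_cons] at hsum
  rw [isChain_cons] at hch
  have htmem : ∀ y ∈ t, y = 1 ∨ y = -1 ∨ y = 0 := fun y hy => hmem y (mem_cons_of_mem x hy)
  rcases hmem x mem_cons_self with rfl | rfl | rfl
  · obtain ⟨q, r, rfl, hq, hqs⟩ := exists_first_return (H := 1) le_rfl
      (fun y hy => by rcases htmem y hy with rfl | rfl | rfl <;> norm_num) hsum.le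
    simp only [sub_self, zero_add] at hq hqs
    have hqne : q ≠ [] := by
      rintro rfl
      simp at hch
    obtain ⟨hchq, hchr, -⟩ := isChain_append.1 hch.2
    obtain ⟨cq, rfl⟩ := ih q.length (by simp) (isPeaklessMotzkin_iff.2
      ⟨fun y hy => htmem y (by simp [hy]), hq, hqs, hchq⟩) hqne rfl
    rcases eq_or_ne r [] with rfl | hrne
    · exact ⟨wide cq, rfl⟩
    · simp only [staysNonneg_append, staysNonneg_cons, sum_append, sum_cons, hqs, Int.reduceNeg,
        add_zero, zero_add, le_refl, zero_le_one, add_neg_cancel, add_neg_cancel_left,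
        true_and] at hnn hsum
      obtain ⟨cr, rfl⟩ := ih r.length (by simp; omega) (isPeaklessMotzkin_iff.2
        ⟨fun y hy => htmem y (by simp [hy]), hnn.2, by omega, (isChain_cons.1 hchr).2⟩) hrne rfl
      exact ⟨arch cq cr, rfl⟩
  · exact absurd hnn.2.nonneg (by norm_num)
  · rcases eq_or_ne t [] with rfl | htne
    · exact ⟨leaf, rfl⟩
    · obtain ⟨c, rfl⟩ := ih t.length (by simp) (isPeaklessMotzkin_iff.2
        ⟨htmem, hnn.2, by simpa using hsum, hch.2⟩) htne rfl
      exact ⟨narrow c, rfl⟩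

end Motzkin

noncomputable def zigzagEquiv (n : ℕ) :
    {c : PathTree // c.weight = n} ≃
      {p : List (ℤ × ℤ) // IsZigzagKnightPath p ∧ pathSize p = 2 * n} :=
  Equiv.ofBijective
    (fun c => ⟨c.1.toZigzag, c.1.isZigzagKnightPath_toZigzag, by simp [pathSize_toZigzag, c.2]⟩)
    ⟨fun _ _ h => Subtype.ext (toZigzag_injective (congrArg Subtype.val h)),
      fun ⟨p, hp, hsize⟩ => by
        obtain ⟨c, rfl⟩ := exists_toZigzag_eq hp
        exact ⟨⟨c, by rw [pathSize_toZigzag] at hsize; omega⟩, rfl⟩⟩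

noncomputable def motzkinEquiv (n : ℕ) :
    {c : PathTree // c.weight = n} ≃ {m : List ℤ // IsPeaklessMotzkin m ∧ m.length = n + 1} :=
  Equiv.ofBijective
    (fun c => ⟨c.1.toMotzkin, c.1.isPeaklessMotzkin_toMotzkin, by simp [c.2]⟩)
    ⟨fun _ _ h => Subtype.ext (toMotzkin_injective (congrArg Subtype.val h)),
      fun ⟨m, hm, hlen⟩ => by
        obtain ⟨c, rfl⟩ := exists_toMotzkin_eq hm (ne_nil_of_length_eq_add_one hlen)
        exact ⟨⟨c, by simpa using hlen⟩, rfl⟩⟩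

instance finite_weight_eq (n : ℕ) : Finite {c : PathTree // c.weight = n} :=
  Finite.of_equiv _ (motzkinEquiv n).symm

noncomputable def count (n : ℕ) : ℕ := Nat.card {c : PathTree // c.weight = n}

theorem weight_eq_zero_iff {c : PathTree} : c.weight = 0 ↔ c = leaf := by
  cases c <;> simp [weight]

theorem weight_eq_one_iff {c : PathTree} : c.weight = 1 ↔ c = narrow leaf := by
  cases c <;> simp [weight, weight_eq_zero_iff]

theorem weight_eq_two_iff {c : PathTree} :
    c.weight = 2 ↔ c = narrow (narrow leaf) ∨ c = wide leaf := by
  cases c <;> simp [weight, weight_eq_zero_iff, weight_eq_one_iff]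

theorem count_zero : count 0 = 1 :=
  Nat.card_eq_one_iff_exists.2 ⟨⟨leaf, rfl⟩, fun c => Subtype.ext (weight_eq_zero_iff.1 c.2)⟩

theorem count_one : count 1 = 1 :=
  Nat.card_eq_one_iff_exists.2
    ⟨⟨narrow leaf, rfl⟩, fun c => Subtype.ext (weight_eq_one_iff.1 c.2)⟩

theorem count_two : count 2 = 2 := by
  refine Nat.card_eq_two_iff.2
    ⟨⟨narrow (narrow leaf), rfl⟩, ⟨wide leaf, rfl⟩, by simp [Subtype.ext_iff], ?_⟩
  ext c
  simpa [Subtype.ext_iff] using weight_eq_two_iff.1 c.2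

def weightAddThreeEquiv (n : ℕ) :
    {c : PathTree // c.weight = n + 3} ≃
      {c : PathTree // c.weight = n + 2} ⊕ {c : PathTree // c.weight = n + 1} ⊕
        {x : PathTree × PathTree // x.1.weight + x.2.weight = n} where
  toFun
    | ⟨leaf, h⟩ => absurd h (by simp [weight])
    | ⟨narrow t, h⟩ => .inl ⟨t, by simp [weight] at h; omega⟩
    | ⟨wide t, h⟩ => .inr (.inl ⟨t, by simp [weight] at h; omega⟩)
    | ⟨arch s t, h⟩ => .inr (.inr ⟨(s, t), by simp [weight] at h; omega⟩)
  invFun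
    | .inl t => ⟨narrow t.1, by simp [weight, t.2]⟩
    | .inr (.inl t) => ⟨wide t.1, by simp [weight, t.2]⟩
    | .inr (.inr x) => ⟨arch x.1.1 x.1.2, by simp [weight, ← x.2]⟩
  left_inv := by rintro ⟨_ | _ | _ | _, h⟩ <;> first | rfl | simp [weight] at h
  right_inv := by rintro (_ | _ | _) <;> rfl

open Finset in
theorem count_add_three (n : ℕ) :
    count (n + 3) =
      count (n + 2) + count (n + 1) + ∑ p ∈ antidiagonal n, count p.1 * count p.2 := by
  rw [count, Nat.card_congr (weightAddThreeEquiv n), Nat.card_sum, Nat.card_sum,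
    card_addFiber, add_assoc]
  rfl

theorem count_values : count 0 = 1 ∧ count 1 = 1 ∧ count 2 = 2 ∧ count 3 = 4 ∧ count 4 = 8 ∧
    count 5 = 17 ∧ count 6 = 37 ∧ count 7 = 82 ∧ count 8 = 185 ∧ count 9 = 423 ∧
    count 10 = 978 := by
  simp [count_add_three, Finset.Nat.sum_antidiagonal_succ, count_zero, count_one, count_two]

end PathTree

theorem zigzagCount_two_mul (n : ℕ) : zigzagCount (2 * n) = PathTree.count n :=
  (Nat.card_congr (PathTree.zigzagEquiv n)).symm

theorem card_peaklessMotzkin (n : ℕ) :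
    Nat.card {m : List ℤ // IsPeaklessMotzkin m ∧ m.length = n + 1} = PathTree.count n :=
  (Nat.card_congr (PathTree.motzkinEquiv n)).symm

theorem even_pathSize {p : List (ℤ × ℤ)} (hp : IsZigzagKnightPath p) : Even (pathSize p) := by
  obtain ⟨c, rfl⟩ := PathTree.exists_toZigzag_eq hp
  rw [PathTree.pathSize_toZigzag]
  exact even_two_mul _

end ZigzagKnight

/-- zigzag knight's paths of size 2n ending on the x-axis are
equinumerous with peakless Motzkin paths of length n+1 (the generalized Catalan
numbers); for n = 0,…,10 these numbers are 1,1,2,4,8,17,37,82,185,423,978; and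
there is no zigzag knight's path of odd size ending on the x-axis. -/
theorem stmt9 :
    (∀ n : ℕ, zigzagCount (2 * n)
        = Nat.card {m : List ℤ // IsPeaklessMotzkin m ∧ m.length = n + 1}) ∧
    (zigzagCount 0 = 1 ∧ zigzagCount 2 = 1 ∧ zigzagCount 4 = 2 ∧ zigzagCount 6 = 4 ∧
      zigzagCount 8 = 8 ∧ zigzagCount 10 = 17 ∧ zigzagCount 12 = 37 ∧
      zigzagCount 14 = 82 ∧ zigzagCount 16 = 185 ∧ zigzagCount 18 = 423 ∧
      zigzagCount 20 = 978) ∧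
    (¬ ∃ p : List (ℤ × ℤ), IsZigzagKnightPath p ∧ Odd (pathSize p)) := by
  open ZigzagKnight in
  refine ⟨fun n => by rw [zigzagCount_two_mul, card_peaklessMotzkin], ?_, ?_⟩
  · simpa [← zigzagCount_two_mul] using PathTree.count_values
  · rintro ⟨p, hp, hodd⟩
    exact Int.not_even_iff_odd.2 hodd (even_pathSize hp)
end

section
/- Let r be the unique formal power series over ℚ with r(0)=0 satisfying r = z²·(1+r)². Then for all n ≥ 1 and k ≥ 1, the coefficient of z^{2n} in r^k equals (k/n)·binom(2n, n−k), and all coefficients of odd powers of z in r^k vanish. -/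
/-!
Write `r^(k+1) = z² (1+r)² r^k = z² (r^k + 2 r^(k+1) + r^(k+2))`. Comparing coefficients, the
coefficients of `z^(m+2)` in the powers of `r` are determined by those of `z^m`, through a recurrence
that preserves parity; this kills all odd coefficients. On even coefficients the recurrence is
Pascal's rule applied twice, `(1+x)² · (1+x)^N = (1+x)^(N+2)`, and it is solved by the ballot numbers
`[z^(2n)] r^k = C(2n-1, n-k) - C(2n-1, n-k-1) = (k/n) C(2n, n-k)`.
-/

open PowerSeries

theorem ichoose_succ_succ (m : ℕ) (j : ℤ) :
    (ichoose (m + 1) (j + 1) : ℤ) = ichoose m j + ichoose m (j + 1) := by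
  unfold ichoose
  rcases lt_trichotomy j (-1) with hj | rfl | hj
  · simp [show ¬ 0 ≤ j + 1 by omega, show ¬ 0 ≤ j by omega]
  · simp
  · obtain ⟨i, rfl⟩ : ∃ i : ℕ, j = i := ⟨j.toNat, by omega⟩
    rw [if_pos (by omega), if_pos (by omega), if_pos (by omega),
      show ((i : ℤ) + 1).toNat = i + 1 by omega, Int.toNat_natCast, Nat.choose_succ_succ']
    push_cast
    ring

theorem ichoose_add_two (m : ℕ) (j : ℤ) :
    (ichoose (m + 2) j : ℤ) = ichoose m j + 2 * ichoose m (j - 1) + ichoose m (j - 2) := by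
  have h₁ := ichoose_succ_succ (m + 1) (j - 1)
  have h₂ := ichoose_succ_succ m (j - 1)
  have h₃ := ichoose_succ_succ m (j - 2)
  simp only [sub_add_cancel, show j - 2 + 1 = j - 1 by ring] at h₁ h₂ h₃
  rw [h₁, h₂, h₃]
  ring

def ballot (N : ℕ) (j : ℤ) : ℤ := ichoose N j - ichoose N (j - 1)

theorem ballot_add_two (N : ℕ) (j : ℤ) :
    ballot (N + 2) j = ballot N j + 2 * ballot N (j - 1) + ballot N (j - 2) := by
  unfold ballot
  rw [ichoose_add_two, ichoose_add_two, show j - 1 - 1 = j - 2 by ring,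
    show j - 1 - 2 = j - 2 - 1 by ring]
  ring

theorem ballot_two_mul_add_one_self (n : ℕ) : ballot (2 * n + 1) (n + 1) = 0 := by
  unfold ballot ichoose
  rw [if_pos (by omega), if_pos (by omega), add_sub_cancel_right,
    show ((n : ℤ) + 1).toNat = n + 1 by omega, Int.toNat_natCast, Nat.choose_symm_half, sub_self]

theorem ballot_two_mul_add_one_mul (n : ℕ) (j : ℤ) :
    ((n : ℚ) + 1) * ballot (2 * n + 1) j = ((n : ℚ) + 1 - j) * ichoose (2 * n + 2) j := by
  unfold ballot ichoose
  rcases lt_trichotomy j 0 with hj | rfl | hj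
  · rw [if_neg (by omega), if_neg (by omega), if_neg (by omega)]
    simp
  · simp
  · obtain ⟨i, rfl⟩ : ∃ i : ℕ, j = i + 1 := ⟨j.toNat - 1, by omega⟩
    simp only [add_sub_cancel_right, show ((i : ℤ) + 1).toNat = i + 1 by omega,
      Int.toNat_natCast, show (0 : ℤ) ≤ i + 1 by omega, Nat.cast_nonneg, if_true]
    have pascal : ((2 * n + 2).choose (i + 1) : ℚ) =
        (2 * n + 1).choose i + (2 * n + 1).choose (i + 1) := by
      exact_mod_cast Nat.choose_succ_succ' (2 * n + 1) i
    have absorption : ((2 * n + 2 : ℕ) : ℚ) * (2 * n + 1).choose i =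
        (2 * n + 2).choose (i + 1) * (i + 1) := by
      exact_mod_cast Nat.add_one_mul_choose_eq (2 * n + 1) i
    push_cast at absorption ⊢
    linear_combination (-(n : ℚ) - 1) * pascal - absorption

def evenCoeff (k : ℕ) : ℕ → ℤ
  | 0 => if k = 0 then 1 else 0
  | t + 1 => ballot (2 * t + 1) ((t : ℤ) + 1 - k)

theorem evenCoeff_zero_left (t : ℕ) : evenCoeff 0 t = if t = 0 then 1 else 0 := by
  cases t with
  | zero => rfl
  | succ t => simpa [evenCoeff] using ballot_two_mul_add_one_self t

theorem evenCoeff_succ_succ (k t : ℕ) :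
    evenCoeff (k + 1) (t + 1) = evenCoeff k t + 2 * evenCoeff (k + 1) t + evenCoeff (k + 2) t := by
  cases t with
  | zero =>
    rcases k with _ | k
    · simp [evenCoeff, ballot, ichoose]
    · simp only [evenCoeff, ballot, ichoose]
      rw [if_neg (by omega), if_neg (by omega)]
      simp
  | succ s =>
    simp only [evenCoeff]
    convert ballot_add_two (2 * s + 1) ((s : ℤ) + 1 - k) using 2 <;> push_cast <;> ring_nf

section KernelEquation

variable {R : Type*} [CommSemiring R] {r : R⟦X⟧}

theorem pow_succ_eq_X_sq_mul (hr : r = X ^ 2 * (1 + r) ^ 2) (k : ℕ) :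
    r ^ (k + 1) = X ^ 2 * (r ^ k + 2 * r ^ (k + 1) + r ^ (k + 2)) := by
  calc r ^ (k + 1) = X ^ 2 * (1 + r) ^ 2 * r ^ k := by rw [← hr, pow_succ']
    _ = X ^ 2 * (r ^ k + 2 * r ^ (k + 1) + r ^ (k + 2)) := by ring

theorem coeff_pow_succ_of_lt_two (hr : r = X ^ 2 * (1 + r) ^ 2) (k : ℕ) {m : ℕ} (hm : m < 2) :
    coeff m (r ^ (k + 1)) = 0 := by
  rw [pow_succ_eq_X_sq_mul hr, coeff_X_pow_mul', if_neg (by omega)]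

theorem coeff_add_two_pow_succ (hr : r = X ^ 2 * (1 + r) ^ 2) (k m : ℕ) :
    coeff (m + 2) (r ^ (k + 1)) =
      coeff m (r ^ k) + 2 * coeff m (r ^ (k + 1)) + coeff m (r ^ (k + 2)) := by
  conv_lhs => rw [pow_succ_eq_X_sq_mul hr, coeff_X_pow_mul]
  rw [map_add, map_add, two_mul, two_mul, map_add]

theorem coeff_two_mul_add_one_pow (hr : r = X ^ 2 * (1 + r) ^ 2) (t k : ℕ) :
    coeff (2 * t + 1) (r ^ k) = 0 := by
  induction t generalizing k with
  | zero =>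
    cases k with
    | zero => simp [coeff_one]
    | succ k => exact coeff_pow_succ_of_lt_two hr k (by omega)
  | succ t ih =>
    cases k with
    | zero => simp [coeff_one]
    | succ k =>
      rw [show 2 * (t + 1) + 1 = 2 * t + 1 + 2 by ring, coeff_add_two_pow_succ hr, ih, ih, ih]
      simp only [mul_zero, add_zero]

end KernelEquation

theorem coeff_two_mul_pow {R : Type*} [CommRing R] {r : R⟦X⟧} (hr : r = X ^ 2 * (1 + r) ^ 2)
    (t k : ℕ) : coeff (2 * t) (r ^ k) = evenCoeff k t := by
  induction t generalizing k with
  | zero =>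
    cases k with
    | zero => simp [evenCoeff]
    | succ k => simpa [evenCoeff] using coeff_pow_succ_of_lt_two hr k (m := 0) (by omega)
  | succ t ih =>
    cases k with
    | zero => simp [coeff_one, evenCoeff_zero_left]
    | succ k =>
      rw [show 2 * (t + 1) = 2 * t + 2 by ring, coeff_add_two_pow_succ hr, ih, ih, ih,
        evenCoeff_succ_succ]
      push_cast
      ring

theorem stmt12_general (r : PowerSeries ℚ)
    (hr : r = PowerSeries.X ^ 2 * (1 + r) ^ 2)
    (n k : ℕ) (hn : 1 ≤ n) :
    PowerSeries.coeff (2 * n) (r ^ k)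
        = ((k : ℚ) / n) * (ichoose (2 * n) ((n : ℤ) - k) : ℚ) ∧
    ∀ m : ℕ, Odd m → PowerSeries.coeff m (r ^ k) = 0 := by
  refine ⟨?_, fun m ⟨t, ht⟩ => ht ▸ coeff_two_mul_add_one_pow hr t k⟩
  obtain ⟨s, rfl⟩ : ∃ s, n = s + 1 := ⟨n - 1, by omega⟩
  have hballot := ballot_two_mul_add_one_mul s ((s : ℤ) + 1 - k)
  rw [coeff_two_mul_pow hr, evenCoeff]
  push_cast at hballot ⊢
  field_simp
  linear_combination hballot

/-- if r is the formal power series over ℚ with r(0)=0 and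
r = z²(1+r)², then [z^{2n}] r^k = (k/n)·binom(2n, n−k) for n, k ≥ 1, and all
odd coefficients of r^k vanish. -/
theorem stmt12 (r : PowerSeries ℚ)
    (h0 : PowerSeries.constantCoeff r = 0)
    (hr : r = PowerSeries.X ^ 2 * (1 + r) ^ 2)
    (n k : ℕ) (hn : 1 ≤ n) (hk : 1 ≤ k) :
    PowerSeries.coeff (2 * n) (r ^ k)
        = ((k : ℚ) / n) * (ichoose (2 * n) ((n : ℤ) - k) : ℚ) ∧
    ∀ m : ℕ, Odd m → PowerSeries.coeff m (r ^ k) = 0 :=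
  stmt12_general r hr n k hn
end

section
/- For every n ≥ 1, the number of non-empty zigzag knight's paths of length 2n ending on the x-axis that begin with the step E=(2,1) equals the number of zigzag knight's paths of length 2n−2 ending on the x-axis; equivalently, every such path beginning with E has the form E Ē β for a unique zigzag knight's path β ending on the x-axis. -/
open List

/-! After the step `E` the path is at height 1, so the next step, which must go down, is `Ē`
(`N̄` would leave ℕ²). Conversely, after `E Ē` the path is back on the x-axis and any path `β`
ending there can follow: its first step goes up, as it must after the down-step `Ē`. Hence
`β ↦ E Ē β` is a length-shifting bijection onto the paths beginning with `E`. -/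

lemma snd_pos_of_mem_knightSteps {s : ℤ × ℤ} (hs : s ∈ KnightSteps) (h : 0 ≤ s.2) :
    0 < s.2 := by
  simp only [KnightSteps, Set.mem_insert_iff, Set.mem_singleton_iff] at hs
  rcases hs with rfl | rfl | rfl | rfl <;> simp_all

lemma eq_Ebar_of_mem_knightSteps {s : ℤ × ℤ} (hs : s ∈ KnightSteps) (hneg : s.2 < 0)
    (hge : -1 ≤ s.2) : s = Ebar := by
  simp only [KnightSteps, Set.mem_insert_iff, Set.mem_singleton_iff] at hs
  rcases hs with rfl | rfl | rfl | rfl <;> simp_all [Ebar]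

lemma nonnegHeights_Estep_Ebar_cons_iff (β : List (ℤ × ℤ)) :
    NonnegHeights (Estep :: Ebar :: β) ↔ NonnegHeights β := by
  refine ⟨fun h i => by simpa [Estep, Ebar] using h (i + 2), fun h i => ?_⟩
  match i with
  | 0 => simp
  | 1 => simp [Estep]
  | j + 2 => simpa [Estep, Ebar] using h j

lemma IsZigzag.Estep_Ebar_cons {β : List (ℤ × ℤ)} (h : IsZigzag β)
    (hup : ∀ b ∈ β.head?, 0 < b.2) : IsZigzag (Estep :: Ebar :: β) := by
  refine isChain_cons_cons.mpr ⟨by simp [Estep, Ebar], ?_⟩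
  cases β with
  | nil => exact isChain_singleton _
  | cons b t =>
    have hb : 0 < b.2 := hup b rfl
    exact isChain_cons_cons.mpr ⟨by simp only [Ebar]; omega, h⟩

lemma isZigzagKnightPath_Estep_Ebar_cons_iff (β : List (ℤ × ℤ)) :
    IsZigzagKnightPath (Estep :: Ebar :: β) ↔ IsZigzagKnightPath β := by
  have hsteps : (∀ s ∈ Estep :: Ebar :: β, s ∈ KnightSteps) ↔ ∀ s ∈ β, s ∈ KnightSteps := by
    simp [KnightSteps, Estep, Ebar]
  have hheight : pathHeight (Estep :: Ebar :: β) = pathHeight β := by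
    simp [pathHeight, Estep, Ebar]
  simp only [IsZigzagKnightPath, IsPartialZigzag, IsPartialKnight, hsteps, hheight,
    nonnegHeights_Estep_Ebar_cons_iff]
  constructor
  · rintro ⟨⟨hknight, hzz⟩, h0⟩
    exact ⟨⟨hknight, hzz.tail.tail⟩, h0⟩
  · rintro ⟨⟨⟨hmem, hnn⟩, hzz⟩, h0⟩
    have hfirst : ∀ b ∈ β.head?, 0 < b.2 := fun b hb =>
      snd_pos_of_mem_knightSteps (hmem b (mem_of_mem_head? hb)) <| by
        obtain ⟨t, rfl⟩ : ∃ t, β = b :: t := by cases β <;> simp_all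
        simpa using hnn 1
    exact ⟨⟨⟨hmem, hnn⟩, hzz.Estep_Ebar_cons hfirst⟩, h0⟩

lemma IsZigzagKnightPath.exists_eq_Estep_Ebar_cons {p : List (ℤ × ℤ)}
    (hp : IsZigzagKnightPath p) (hhead : p.head? = some Estep) :
    ∃ β, p = Estep :: Ebar :: β := by
  obtain ⟨⟨⟨hmem, hnn⟩, hzz⟩, h0⟩ := hp
  obtain ⟨q, rfl⟩ : ∃ q, p = Estep :: q := by
    cases p <;> simp_all
  obtain ⟨s, t, rfl⟩ : ∃ s t, q = s :: t := by
    cases q <;> simp_all [pathHeight, Estep]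
  have hdown : s.2 < 0 := by
    have := (isChain_cons_cons.mp hzz).1
    simp only [Estep] at this
    omega
  have hge : 0 ≤ 1 + s.2 := by simpa [Estep] using hnn 2
  exact ⟨t, by rw [eq_Ebar_of_mem_knightSteps (hmem s (by simp)) hdown (by omega)]⟩

def prependEstepEbar (m : ℕ) :
    {β : List (ℤ × ℤ) // IsZigzagKnightPath β ∧ β.length = m} ≃
      {p : List (ℤ × ℤ) // IsZigzagKnightPath p ∧ p.length = m + 2 ∧ p.head? = some Estep} where
  toFun β := ⟨Estep :: Ebar :: β.1,
    (isZigzagKnightPath_Estep_Ebar_cons_iff _).mpr β.2.1, by simp [β.2.2], rfl⟩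
  invFun p := ⟨p.1.drop 2, by
    obtain ⟨β, hβ⟩ := p.2.1.exists_eq_Estep_Ebar_cons p.2.2.2
    have hlen := p.2.2.1
    rw [hβ] at hlen ⊢
    exact ⟨(isZigzagKnightPath_Estep_Ebar_cons_iff β).mp (hβ ▸ p.2.1), by simpa using hlen⟩⟩
  left_inv β := rfl
  right_inv p := by
    obtain ⟨β, hβ⟩ := p.2.1.exists_eq_Estep_Ebar_cons p.2.2.2
    exact Subtype.ext (by simp [hβ])

/-- for n ≥ 1, zigzag knight's paths of length 2n ending on the
x-axis and beginning with E are equinumerous with zigzag knight's paths of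
length 2n−2 ending on the x-axis; each such path is E Ē β for a unique zigzag
knight's path β ending on the x-axis. -/
theorem stmt16 (n : ℕ) (hn : 1 ≤ n) :
    Nat.card {p : List (ℤ × ℤ) //
        IsZigzagKnightPath p ∧ p.length = 2 * n ∧ p.head? = some Estep}
      = Nat.card {p : List (ℤ × ℤ) // IsZigzagKnightPath p ∧ p.length = 2 * n - 2} ∧
    ∀ p : List (ℤ × ℤ), IsZigzagKnightPath p → p.length = 2 * n →
      p.head? = some Estep →
        ∃! β, IsZigzagKnightPath β ∧ p = Estep :: Ebar :: β := by
  refine ⟨?_, fun p hp _ hhead => ?_⟩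
  · have hlen : 2 * n = (2 * n - 2) + 2 := by omega
    rw [hlen]
    exact (Nat.card_congr (prependEstepEbar (2 * n - 2))).symm
  · obtain ⟨β, rfl⟩ := hp.exists_eq_Estep_Ebar_cons hhead
    refine ⟨β, ⟨(isZigzagKnightPath_Estep_Ebar_cons_iff β).mp hp, rfl⟩, ?_⟩
    rintro γ ⟨-, hγ⟩
    simpa using hγ.symm
end
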